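/- arXiv:1310.7462 — 6 statements merged into one kernel-verified Lean document; each statement's English description precedes it below -/
import Mathlib

section
/- If L is a slowly varying function on (0,∞) (i.e., L(αx)/L(x) → 1 as x → ∞ for every fixed α > 0) and α < -1, then the ratio (∫_x^∞ t^α L(t) dt) / (x^{α+1} L(x)) tends to -1/(α+1) as x → ∞. -/
/-!
Substituting `t = x s` turns the ratio into `∫_1^∞ s^α L(x s) / L(x) ds`, whose integrand tends
to `s^α` pointwise; since `∫_1^∞ s^α ds = -1/(α+1)`, dominated convergence finishes the proof once
we have Potter's bound `L(x s) / L(x) ≤ e^ε s^ε` for `s ≥ 1`, `x` large, with `α + ε < -1`.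
Potter's bound follows from Karamata's uniform convergence theorem for `h(u) = log L(e^u)`:
`h(u + t) - h(u) → 0` uniformly for `t ∈ [0, 1]`. For that, the sets of `s ∈ [0, 2]` with
`|h(u + s) - h(u)| < ε/2` have measure tending to `2` (by measurability and pointwise convergence),
so for large `u` and `t ∈ [0, 1]` the good set of `u` and the `t`-translate of the good set of
`u + t`, both inside `[0, 3]`, must meet, and the triangle inequality through a common point
bounds `|h(u + t) - h(u)|` by `ε`.
-/

open MeasureTheory Filter Set Topology

section UniformConvergence

variable {h : ℝ → ℝ}

theorem tendsto_volume_setOf_abs_add_sub_lt (hm : Measurable h)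
    (hc : ∀ t, Tendsto (fun u => h (u + t) - h u) atTop (𝓝 0))
    {K : Set ℝ} (hK : MeasurableSet K) (hKfin : volume K ≠ ⊤) {δ : ℝ} (hδ : 0 < δ) :
    Tendsto (fun u => volume {s ∈ K | |h (u + s) - h u| < δ}) atTop (𝓝 (volume K)) := by
  refine tendsto_measure_of_tendsto_indicator atTop (fun u => hK.inter ?_) hK hKfin
    (Eventually.of_forall fun u => sep_subset K _) fun s => ?_
  · exact measurableSet_lt ((hm.comp (measurable_const_add u)).sub measurable_const).abs
      measurable_const
  · filter_upwards [(hc s).abs.eventually (gt_mem_nhds (by simpa using hδ))] with u hu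
    simp [hu]

theorem Measurable.tendstoUniformlyOn_add_sub (hm : Measurable h)
    (hc : ∀ t, Tendsto (fun u => h (u + t) - h u) atTop (𝓝 0)) :
    TendstoUniformlyOn (fun u t => h (u + t) - h u) 0 atTop (Icc 0 1) := by
  refine Metric.tendstoUniformlyOn_iff.2 fun ε hε => ?_
  set G : ℝ → Set ℝ := fun u => {s ∈ Icc 0 2 | |h (u + s) - h u| < ε / 2}
  have hGmeas : ∀ u, MeasurableSet (G u) := fun u => measurableSet_Icc.inter
    (measurableSet_lt ((hm.comp (measurable_const_add u)).sub measurable_const).abs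
      measurable_const)
  have hG : Tendsto (fun u => volume.real (G u)) atTop (𝓝 (volume.real (Icc (0 : ℝ) 2))) :=
    (ENNReal.tendsto_toReal measure_Icc_lt_top.ne).comp
      (tendsto_volume_setOf_abs_add_sub_lt hm hc measurableSet_Icc measure_Icc_lt_top.ne
        (half_pos hε))
  rw [Real.volume_real_Icc_of_le zero_le_two, sub_zero] at hG
  obtain ⟨X, hX⟩ :=
    eventually_atTop.1 (hG.eventually (lt_mem_nhds (by norm_num : (3 / 2 : ℝ) < 2)))
  filter_upwards [eventually_ge_atTop X] with u hu t ht
  -- Two subsets of `[0, 3]` of measure `> 3 / 2` each must meet.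
  obtain ⟨s, hsu, hsut⟩ : (G u ∩ (· + -t) ⁻¹' G (u + t)).Nonempty := by
    refine nonempty_inter_of_measureReal_lt_add (μ := volume)
      (measurable_add_const _ (hGmeas _)) (u := Icc 0 3) ?_ ?_ ?_ measure_Icc_lt_top.ne
    · exact fun s hs => ⟨hs.1.1, by linarith [hs.1.2]⟩
    · exact fun s hs => ⟨by linarith [hs.1.1, ht.1], by linarith [hs.1.2, ht.2]⟩
    · have hpre : volume.real ((· + -t) ⁻¹' G (u + t)) = volume.real (G (u + t)) := by
        simp only [Measure.real, measure_preimage_add_right]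
      rw [hpre, Real.volume_real_Icc_of_le (by norm_num)]
      linarith [hX u hu, hX (u + t) (by linarith [ht.1])]
  have h1 : |h (u + s) - h u| < ε / 2 := hsu.2
  have h2 : |h (u + t) - h (u + s)| < ε / 2 := by
    rw [abs_sub_comm]
    simpa only [show u + t + (s + -t) = u + s by ring] using hsut.2
  rw [Pi.zero_apply, dist_zero_left, Real.norm_eq_abs]
  calc |h (u + t) - h u| ≤ |h (u + t) - h (u + s)| + |h (u + s) - h u| := abs_sub_le _ _ _
    _ < ε := by linarith

theorem abs_add_sub_le_mul_add_one {X ε : ℝ} (hε : 0 ≤ ε)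
    (H : ∀ u ≥ X, ∀ t ∈ Icc (0 : ℝ) 1, |h (u + t) - h u| ≤ ε) {u t : ℝ} (hu : X ≤ u)
    (ht : 0 ≤ t) : |h (u + t) - h u| ≤ ε * (t + 1) := by
  have hshort : ∀ u ≥ X, ∀ t ∈ Icc (0 : ℝ) 1, |h (u + t) - h u| ≤ ε * (t + 1) :=
    fun u hu t ht => (H u hu t ht).trans (le_mul_of_one_le_right hε (by linarith [ht.1]))
  suffices ∀ n : ℕ, ∀ u ≥ X, ∀ t ∈ Icc (0 : ℝ) (n + 1), |h (u + t) - h u| ≤ ε * (t + 1) from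
    this ⌈t⌉₊ u hu t ⟨ht, (Nat.le_ceil t).trans (by linarith)⟩
  intro n
  induction n with
  | zero => simpa using hshort
  | succ n ih =>
    intro u hu t ht
    rcases le_or_gt t 1 with ht1 | ht1
    · exact hshort u hu t ⟨ht.1, ht1⟩
    have hstep := ih (u + 1) (by linarith) (t - 1)
      ⟨by linarith, by push_cast at ht; linarith [ht.2]⟩
    rw [show u + 1 + (t - 1) = u + t by ring] at hstep
    calc |h (u + t) - h u| ≤ |h (u + t) - h (u + 1)| + |h (u + 1) - h u| := abs_sub_le _ _ _
      _ ≤ ε * (t - 1 + 1) + ε := add_le_add hstep (H u hu 1 ⟨zero_le_one, le_rfl⟩)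
      _ = ε * (t + 1) := by ring

end UniformConvergence

section SlowlyVarying

variable {L : ℝ → ℝ}

theorem tendsto_log_comp_exp_add_sub (hLpos : ∀ x > 0, 0 < L x)
    (hslow : ∀ c > 0, Tendsto (fun x => L (c * x) / L x) atTop (𝓝 1)) (t : ℝ) :
    Tendsto (fun u => Real.log (L (Real.exp (u + t))) - Real.log (L (Real.exp u))) atTop
      (𝓝 0) := by
  have := ((hslow _ (Real.exp_pos t)).comp Real.tendsto_exp_atTop).log one_ne_zero
  rw [Real.log_one] at this
  refine this.congr fun u => ?_
  rw [Function.comp_apply, Real.log_div (hLpos _ (by positivity)).ne'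
    (hLpos _ (Real.exp_pos u)).ne', Real.exp_add, mul_comm]

theorem eventually_div_le_exp_mul_rpow (hLmeas : Measurable L) (hLpos : ∀ x > 0, 0 < L x)
    (hslow : ∀ c > 0, Tendsto (fun x => L (c * x) / L x) atTop (𝓝 1)) {ε : ℝ} (hε : 0 < ε) :
    ∀ᶠ x in atTop, ∀ s ≥ 1, L (x * s) / L x ≤ Real.exp ε * s ^ ε := by
  set h : ℝ → ℝ := fun u => Real.log (L (Real.exp u))
  have hm : Measurable h := Real.measurable_log.comp (hLmeas.comp Real.measurable_exp)
  obtain ⟨X, hX⟩ := eventually_atTop.1 (Metric.tendstoUniformlyOn_iff.1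
    (hm.tendstoUniformlyOn_add_sub (tendsto_log_comp_exp_add_sub hLpos hslow)) ε hε)
  have hunif : ∀ u ≥ X, ∀ t ∈ Icc (0 : ℝ) 1, |h (u + t) - h u| ≤ ε := fun u hu t ht => by
    simpa [Real.dist_eq, abs_sub_comm] using (hX u hu t ht).le
  filter_upwards [eventually_ge_atTop (Real.exp X)] with x hx s hs
  have hx0 : 0 < x := (Real.exp_pos X).trans_le hx
  have hs0 : 0 < s := one_pos.trans_le hs
  have hlog := (abs_le.1 (abs_add_sub_le_mul_add_one hε.le hunif
    ((Real.le_log_iff_exp_le hx0).2 hx) (Real.log_nonneg hs))).2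
  simp only [h, Real.exp_add, Real.exp_log hx0, Real.exp_log hs0] at hlog
  calc L (x * s) / L x = Real.exp (Real.log (L (x * s)) - Real.log (L x)) := by
        rw [Real.exp_sub, Real.exp_log (hLpos _ (by positivity)), Real.exp_log (hLpos x hx0)]
    _ ≤ Real.exp (ε * (Real.log s + 1)) := Real.exp_le_exp.2 hlog
    _ = Real.exp ε * s ^ ε := by
        rw [Real.rpow_def_of_pos hs0, mul_add, mul_one, Real.exp_add, mul_comm ε]; ring

theorem tendsto_integral_Ioi_one_rpow_mul_div (hLmeas : Measurable L) (hLpos : ∀ x > 0, 0 < L x)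
    (hslow : ∀ c > 0, Tendsto (fun x => L (c * x) / L x) atTop (𝓝 1)) {α : ℝ} (hα : α < -1) :
    Tendsto (fun x => ∫ s in Ioi 1, s ^ α * (L (x * s) / L x)) atTop
      (𝓝 (-1 / (α + 1))) := by
  set ε := (-1 - α) / 2
  have hε : 0 < ε := by simp only [ε]; linarith
  have hαε : α + ε < -1 := by simp only [ε]; linarith
  have hlim : ∫ s in Ioi (1 : ℝ), s ^ α = -1 / (α + 1) := by
    rw [integral_Ioi_rpow_of_lt hα one_pos, Real.one_rpow]
  rw [← hlim]
  refine tendsto_integral_filter_of_dominated_convergence (fun s => Real.exp ε * s ^ (α + ε))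
    (Eventually.of_forall fun x => ?_) ?_
    ((integrableOn_Ioi_rpow_of_lt hαε one_pos).const_mul _) ?_
  · exact ((measurable_id.pow_const α).mul
      ((hLmeas.comp (measurable_const_mul x)).div_const _)).aestronglyMeasurable
  · filter_upwards [eventually_div_le_exp_mul_rpow hLmeas hLpos hslow hε,
      eventually_gt_atTop 0] with x hx hx0
    refine (ae_restrict_iff' measurableSet_Ioi).2 (Eventually.of_forall fun s (hs : 1 < s) => ?_)
    have hs0 : 0 < s := one_pos.trans hs
    rw [Real.norm_of_nonneg (mul_nonneg (Real.rpow_nonneg hs0.le α)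
      (div_nonneg (hLpos _ (by positivity)).le (hLpos x hx0).le))]
    calc s ^ α * (L (x * s) / L x) ≤ s ^ α * (Real.exp ε * s ^ ε) :=
          mul_le_mul_of_nonneg_left (hx s hs.le) (Real.rpow_nonneg hs0.le α)
      _ = Real.exp ε * s ^ (α + ε) := by rw [Real.rpow_add hs0]; ring
  · refine (ae_restrict_iff' measurableSet_Ioi).2 (Eventually.of_forall fun s (hs : 1 < s) => ?_)
    simpa [mul_comm _ s] using ((hslow s (one_pos.trans hs)).const_mul (s ^ α))

end SlowlyVarying

theorem integral_Ioi_rpow_mul_div_eq (L : ℝ → ℝ) (α : ℝ) {x : ℝ} (hx : 0 < x) :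
    (∫ t in Ioi x, t ^ α * L t) / (x ^ (α + 1) * L x) =
      ∫ s in Ioi 1, s ^ α * (L (x * s) / L x) := by
  have hxα : x ^ α ≠ 0 := (Real.rpow_pos_of_pos hx α).ne'
  have hcv := integral_comp_mul_left_Ioi (fun t => t ^ α * L t) 1 hx
  rw [mul_one, smul_eq_mul] at hcv
  calc (∫ t in Ioi x, t ^ α * L t) / (x ^ (α + 1) * L x)
      = (∫ s in Ioi 1, (x * s) ^ α * L (x * s)) / (x ^ α * L x) := by
        rw [hcv, Real.rpow_add_one hx.ne']; field_simp
    _ = ∫ s in Ioi 1, (x * s) ^ α * L (x * s) / (x ^ α * L x) := (integral_div _ _).symm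
    _ = ∫ s in Ioi 1, s ^ α * (L (x * s) / L x) := by
        refine setIntegral_congr_fun measurableSet_Ioi fun s (hs : 1 < s) => ?_
        rw [Real.mul_rpow hx.le (zero_lt_one.trans hs).le, mul_assoc, mul_div_mul_left _ _ hxα,
          mul_div_assoc]

theorem slowly_varying_tail_integral_general (L : ℝ → ℝ) (α : ℝ)
    (hLmeas : Measurable L)
    (hLpos : ∀ x > 0, 0 < L x)
    (hslow : ∀ c > 0, Tendsto (fun x => L (c * x) / L x) atTop (𝓝 1))
    (hα : α < -1) :
    Tendsto (fun x => (∫ t in Ioi x, t ^ α * L t) / (x ^ (α + 1) * L x))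
      atTop (𝓝 (-1 / (α + 1))) := by
  refine (tendsto_integral_Ioi_one_rpow_mul_div hLmeas hLpos hslow hα).congr' ?_
  filter_upwards [eventually_gt_atTop 0] with x hx
  exact (integral_Ioi_rpow_mul_div_eq L α hx).symm

/-- Karamata: if `L` is slowly varying on `(0,∞)` and `α < -1`, then
`(∫_x^∞ t^α L(t) dt) / (x^(α+1) L(x)) → -1/(α+1)` as `x → ∞`. -/
theorem slowly_varying_tail_integral (L : ℝ → ℝ) (α : ℝ)
    (hLmeas : Measurable L)
    (hLpos : ∀ x > 0, 0 < L x)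
    (hslow : ∀ c > 0, Tendsto (fun x => L (c * x) / L x) atTop (𝓝 1))
    (hα : α < -1)
    (hint : ∀ x > 0, IntegrableOn (fun t => t ^ α * L t) (Ioi x)) :
    Tendsto (fun x => (∫ t in Ioi x, t ^ α * L t) / (x ^ (α + 1) * L x))
      atTop (𝓝 (-1 / (α + 1))) :=
  slowly_varying_tail_integral_general L α hLmeas hLpos hslow hα
end

section
/- If L is a slowly varying function on (0,∞), locally bounded on [A₀,∞) for some A₀ > 0, and α > -1, then (∫_{A₀}^x t^α L(t) dt) / (x^{α+1} L(x)) tends to 1/(α+1) as x → ∞. -/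
open MeasureTheory Filter Set Topology

/-- Uniform convergence theorem for additively slowly varying functions. -/
theorem uct_aux (h : ℝ → ℝ) (hm : Measurable h)
    (hp : ∀ t : ℝ, Tendsto (fun u => h (u + t) - h u) atTop (𝓝 0)) :
    ∀ ε > 0, ∀ᶠ u in (atTop : Filter ℝ), ∀ t ∈ Icc (0:ℝ) 1, |h (u + t) - h u| ≤ ε := by
  intro ε hε
  by_contra hcon
  rw [Filter.not_eventually] at hcon
  obtain ⟨u, hu, hprop⟩ := Filter.exists_seq_forall_of_frequently hcon
  push_neg at hprop
  choose t ht hbig using hprop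
  -- two sequences of functions
  set f : ℕ → ℝ → ℝ := fun n s => h (u n + s) - h (u n) with hf
  set g : ℕ → ℝ → ℝ := fun n s => h (u n + t n + s) - h (u n + t n) with hg
  have hutn : Tendsto (fun n => u n + t n) atTop atTop :=
    tendsto_atTop_mono (fun n => le_add_of_nonneg_right (ht n).1) hu
  have hfptw : ∀ s : ℝ, Tendsto (fun n => f n s) atTop (𝓝 0) := fun s => (hp s).comp hu
  have hgptw : ∀ s : ℝ, Tendsto (fun n => g n s) atTop (𝓝 0) := fun s => (hp s).comp hutn
  have hfm : ∀ n, StronglyMeasurable (f n) := fun n =>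
    ((hm.comp (measurable_const.add measurable_id)).sub measurable_const).stronglyMeasurable
  have hgm : ∀ n, StronglyMeasurable (g n) := fun n =>
    ((hm.comp (measurable_const.add measurable_id)).sub measurable_const).stronglyMeasurable
  have h0m : StronglyMeasurable (fun _ : ℝ => (0:ℝ)) := stronglyMeasurable_const
  have hIcc : MeasurableSet (Icc (0:ℝ) 3) := measurableSet_Icc
  have hIccfin : volume (Icc (0:ℝ) 3) ≠ ⊤ := by simp [Real.volume_Icc]
  obtain ⟨e₁, he₁sub, he₁m, he₁meas, he₁unif⟩ :=
    tendstoUniformlyOn_of_ae_tendsto (μ := volume) hfm h0m hIcc hIccfin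
      (Filter.Eventually.of_forall (fun s _ => hfptw s)) (ε := 1/4) (by norm_num)
  obtain ⟨e₂, he₂sub, he₂m, he₂meas, he₂unif⟩ :=
    tendstoUniformlyOn_of_ae_tendsto (μ := volume) hgm h0m hIcc hIccfin
      (Filter.Eventually.of_forall (fun s _ => hgptw s)) (ε := 1/4) (by norm_num)
  set T : Set ℝ := Icc 0 3 \ (e₁ ∪ e₂) with hT
  have hTm : MeasurableSet T := hIcc.diff (he₁m.union he₂m)
  have hTvol : ENNReal.ofReal (5/2) ≤ volume T := by
    have h1 : volume (e₁ ∪ e₂) ≤ ENNReal.ofReal (1/2) := by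
      calc volume (e₁ ∪ e₂) ≤ volume e₁ + volume e₂ := measure_union_le _ _
        _ ≤ ENNReal.ofReal (1/4) + ENNReal.ofReal (1/4) := add_le_add he₁meas he₂meas
        _ = ENNReal.ofReal (1/2) := by rw [← ENNReal.ofReal_add] <;> norm_num
    have h2 : volume (Icc (0:ℝ) 3 \ (e₁ ∪ e₂)) ≥ volume (Icc (0:ℝ) 3) - volume (e₁ ∪ e₂) :=
      le_measure_diff
    calc ENNReal.ofReal (5/2) = ENNReal.ofReal 3 - ENNReal.ofReal (1/2) := by
          rw [← ENNReal.ofReal_sub] <;> norm_num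
      _ ≤ volume (Icc (0:ℝ) 3) - volume (e₁ ∪ e₂) := by
          apply tsub_le_tsub _ h1
          simp [Real.volume_Icc]
      _ ≤ _ := h2
  -- for each n, find s with s ∈ T and s - t n ∈ T
  have hpick : ∀ n, ∃ s, s ∈ T ∧ s - t n ∈ T := by
    intro n
    set B : Set ℝ := (fun s => s - t n) ⁻¹' T with hB
    have hBm : MeasurableSet B := hTm.preimage (measurable_id.sub measurable_const)
    have hBvol : volume B = volume T := by
      simp only [hB, sub_eq_add_neg]
      exact measure_preimage_add_right volume (-t n) T
    have hsubu : T ∪ B ⊆ Icc (0:ℝ) 4 := by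
      rintro s (hs | hs)
      · exact ⟨hs.1.1, hs.1.2.trans (by norm_num)⟩
      · have h1 : s - t n ∈ Icc (0:ℝ) 3 := hs.1
        have h2 := ht n
        rw [mem_Icc] at h1
        exact ⟨by linarith [h1.1, h2.1], by linarith [h1.2, h2.2]⟩
    have hiu : volume (T ∪ B) ≤ ENNReal.ofReal 4 := by
      calc volume (T ∪ B) ≤ volume (Icc (0:ℝ) 4) := measure_mono hsubu
        _ = ENNReal.ofReal 4 := by simp [Real.volume_Icc]
    have hkey : volume (T ∩ B) ≠ 0 := by
      intro hzero
      have := measure_union_add_inter T hBm (μ := volume)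
      rw [hzero, add_zero] at this
      have h5 : ENNReal.ofReal 5 ≤ volume T + volume B := by
        rw [hBvol, show (5:ℝ) = 5/2 + 5/2 by norm_num, ENNReal.ofReal_add (by norm_num) (by norm_num)]
        exact add_le_add hTvol hTvol
      rw [← this] at h5
      have : ENNReal.ofReal 5 ≤ ENNReal.ofReal 4 := h5.trans hiu
      rw [ENNReal.ofReal_le_ofReal_iff (by norm_num)] at this
      norm_num at this
    obtain ⟨s, hs⟩ := nonempty_of_measure_ne_zero hkey
    exact ⟨s, hs.1, hs.2⟩
  choose s hsT hstT using hpick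
  -- uniform convergence gives contradiction
  rw [Metric.tendstoUniformlyOn_iff] at he₁unif he₂unif
  have hTe₁ : T ⊆ Icc 0 3 \ e₁ := diff_subset_diff_right subset_union_left
  have hTe₂ : T ⊆ Icc 0 3 \ e₂ := diff_subset_diff_right subset_union_right
  obtain ⟨n, hn₁, hn₂⟩ := ((he₁unif (ε/2) (by linarith)).and (he₂unif (ε/2) (by linarith))).exists
  have key : h (u n + t n) - h (u n) = f n (s n) - g n (s n - t n) := by
    simp only [hf, hg]; ring_nf
  have h1 : |f n (s n)| < ε/2 := by
    have := hn₁ (s n) (hTe₁ (hsT n))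
    rwa [Real.dist_eq, abs_sub_comm, sub_zero] at this
  have h2 : |g n (s n - t n)| < ε/2 := by
    have := hn₂ (s n - t n) (hTe₂ (hstT n))
    rwa [Real.dist_eq, abs_sub_comm, sub_zero] at this
  have : |h (u n + t n) - h (u n)| < ε := by
    rw [key]; calc |f n (s n) - g n (s n - t n)| ≤ |f n (s n)| + |g n (s n - t n)| := abs_sub _ _
      _ < ε := by linarith
  exact absurd this (not_lt.2 (hbig n).le)

open MeasureTheory Filter Set Topology

theorem chain_aux (h : ℝ → ℝ) (ε U : ℝ) (hε : 0 ≤ ε)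
    (hU : ∀ u ≥ U, ∀ t ∈ Icc (0:ℝ) 1, |h (u + t) - h u| ≤ ε) :
    ∀ u ≥ U, ∀ t ≥ (0:ℝ), |h (u + t) - h u| ≤ ε * (t + 1) := by
  have main : ∀ n : ℕ, ∀ u ≥ U, ∀ t : ℝ, 0 ≤ t → t ≤ (n:ℝ) + 1 → |h (u + t) - h u| ≤ ε * (n + 1) := by
    intro n
    induction n with
    | zero =>
      intro u hu t ht0 ht1
      simpa using hU u hu t ⟨ht0, by simpa using ht1⟩
    | succ n ih =>
      intro u hu t ht0 ht1
      by_cases hc : t ≤ n + 1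
      · calc |h (u + t) - h u| ≤ ε * (n + 1) := ih u hu t ht0 hc
          _ ≤ ε * ((n:ℝ) + 1 + 1) := by nlinarith
          _ = ε * ((n+1:ℕ) + 1) := by push_cast; ring
      · push_neg at hc
        have h1 : |h ((u + 1) + (t - 1)) - h (u + 1)| ≤ ε * (n + 1) := by
          apply ih (u + 1) (by linarith) (t - 1) (by linarith)
          push_cast at ht1 ⊢; linarith
        have h2 : |h (u + 1) - h u| ≤ ε := hU u hu 1 ⟨by norm_num, le_refl 1⟩
        have he : (u + 1) + (t - 1) = u + t := by ring
        rw [he] at h1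
        calc |h (u + t) - h u| ≤ |h (u + t) - h (u + 1)| + |h (u + 1) - h u| := abs_sub_le _ _ _
          _ ≤ ε * (n + 1) + ε := add_le_add h1 h2
          _ = ε * ((n+1:ℕ) + 1) := by push_cast; ring
  intro u hu t ht
  have hfl : t < ⌊t⌋₊ + 1 := Nat.lt_floor_add_one t
  have hfl2 : (⌊t⌋₊ : ℝ) ≤ t := Nat.floor_le ht
  calc |h (u + t) - h u| ≤ ε * (⌊t⌋₊ + 1) := main ⌊t⌋₊ u hu t ht hfl.le
    _ ≤ ε * (t + 1) := by nlinarith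

/-- Potter bounds. -/
theorem potter_aux (L : ℝ → ℝ) (hLmeas : Measurable L)
    (hLpos : ∀ x > 0, 0 < L x)
    (hslow : ∀ c > 0, Tendsto (fun x => L (c * x) / L x) atTop (𝓝 1))
    (δ : ℝ) (hδ : 0 < δ) :
    ∃ Y : ℝ, 1 ≤ Y ∧ ∀ x ≥ Y, ∀ l ≥ (1:ℝ),
      L (l * x) / L x ≤ Real.exp δ * l ^ δ ∧
      Real.exp (-δ) * l ^ (-δ) ≤ L (l * x) / L x := by
  set h : ℝ → ℝ := fun u => Real.log (L (Real.exp u)) with hh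
  have hm : Measurable h := (hLmeas.comp Real.measurable_exp).log
  have hp : ∀ t : ℝ, Tendsto (fun u => h (u + t) - h u) atTop (𝓝 0) := by
    intro t
    have h1 : Tendsto (fun y : ℝ => L (Real.exp t * y) / L y) atTop (𝓝 1) :=
      hslow _ (Real.exp_pos t)
    have h2 : Tendsto (fun u : ℝ => L (Real.exp t * Real.exp u) / L (Real.exp u)) atTop (𝓝 1) :=
      h1.comp Real.tendsto_exp_atTop
    have h3 := (Real.continuousAt_log (by norm_num)).tendsto.comp h2
    simp only [Real.log_one] at h3
    apply h3.congr
    intro u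
    simp only [Function.comp_apply, hh]
    rw [Real.log_div (ne_of_gt (hLpos _ (by positivity))) (ne_of_gt (hLpos _ (Real.exp_pos u))),
      ← Real.exp_add, add_comm t u]
  obtain ⟨U, hUp⟩ := (uct_aux h hm hp δ hδ).exists_forall_of_atTop
  have hchain := chain_aux h δ U hδ.le hUp
  refine ⟨max (Real.exp U) 1, le_max_right _ _, ?_⟩
  intro x hx l hl
  have hx0 : 0 < x := lt_of_lt_of_le one_pos (le_trans (le_max_right _ _) hx)
  have hl0 : 0 < l := lt_of_lt_of_le one_pos hl
  have hlogx : Real.log x ≥ U := by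
    rw [ge_iff_le, ← Real.log_exp U]
    exact Real.log_le_log (Real.exp_pos U) (le_trans (le_max_left _ _) hx)
  have hlogl : Real.log l ≥ 0 := Real.log_nonneg hl
  have hkey := hchain (Real.log x) hlogx (Real.log l) hlogl
  have he1 : Real.exp (Real.log x + Real.log l) = l * x := by
    rw [Real.exp_add, Real.exp_log hx0, Real.exp_log hl0, mul_comm]
  have he2 : Real.exp (Real.log x) = x := Real.exp_log hx0
  rw [hh] at hkey
  simp only [he1, he2] at hkey
  have hLlx : 0 < L (l * x) := hLpos _ (by positivity)
  have hLx : 0 < L x := hLpos _ hx0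
  have hratio : L (l * x) / L x = Real.exp (Real.log (L (l * x)) - Real.log (L x)) := by
    rw [Real.exp_sub, Real.exp_log hLlx, Real.exp_log hLx]
  rw [abs_le] at hkey
  constructor
  · rw [hratio]
    calc Real.exp (Real.log (L (l * x)) - Real.log (L x)) ≤ Real.exp (δ * (Real.log l + 1)) :=
          Real.exp_le_exp.2 hkey.2
      _ = Real.exp δ * l ^ δ := by
          rw [Real.rpow_def_of_pos hl0, ← Real.exp_add]; ring_nf
  · rw [hratio]
    calc Real.exp (-δ) * l ^ (-δ) = Real.exp (-(δ * (Real.log l + 1))) := by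
          rw [Real.rpow_def_of_pos hl0, ← Real.exp_add]; ring_nf
      _ ≤ Real.exp (Real.log (L (l * x)) - Real.log (L x)) := Real.exp_le_exp.2 (by linarith [hkey.1])

/-- Karamata: if `L` is slowly varying on `(0,∞)`, locally bounded on `[A₀,∞)`
for some `A₀ > 0`, and `α > -1`, then
`(∫_{A₀}^x t^α L(t) dt) / (x^(α+1) L(x)) → 1/(α+1)` as `x → ∞`. -/
theorem slowly_varying_head_integral (L : ℝ → ℝ) (α A₀ : ℝ)
    (hLmeas : Measurable L)
    (hLpos : ∀ x > 0, 0 < L x)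
    (hslow : ∀ c > 0, Tendsto (fun x => L (c * x) / L x) atTop (𝓝 1))
    (hA₀ : 0 < A₀)
    (hloc : ∀ b ≥ A₀, ∃ M : ℝ, ∀ t ∈ Icc A₀ b, L t ≤ M)
    (hα : -1 < α) :
    Tendsto (fun x => (∫ t in Ioc A₀ x, t ^ α * L t) / (x ^ (α + 1) * L x))
      atTop (𝓝 (1 / (α + 1))) := by
  set δ : ℝ := (α + 1) / 2 with hδdef
  have hδ : 0 < δ := by rw [hδdef]; linarith
  have hαδ : -1 < α - δ := by rw [hδdef]; linarith
  obtain ⟨Y₀, hY₀1, hpot₀⟩ := potter_aux L hLmeas hLpos hslow δ hδ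
  set Y : ℝ := max Y₀ A₀ with hYdef
  have hY1 : (1:ℝ) ≤ Y := le_trans hY₀1 (le_max_left _ _)
  have hYA : A₀ ≤ Y := le_max_right _ _
  have hY0 : (0:ℝ) < Y := lt_of_lt_of_le one_pos hY1
  have hpot : ∀ x ≥ Y, ∀ l ≥ (1:ℝ),
      L (l * x) / L x ≤ Real.exp δ * l ^ δ ∧
      Real.exp (-δ) * l ^ (-δ) ≤ L (l * x) / L x :=
    fun x hx => hpot₀ x (le_trans (le_max_left _ _) hx)
  obtain ⟨M, hM⟩ := hloc Y hYA
  have hM0 : 0 < M := lt_of_lt_of_le (hLpos A₀ hA₀) (hM A₀ ⟨le_refl _, hYA⟩)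
  have hLY : 0 < L Y := hLpos Y hY0
  set c₁ : ℝ := Real.exp (-δ) * Y ^ δ * L Y with hc₁def
  have hc₁ : 0 < c₁ := by positivity
  -- lower bound on L
  have hlow : ∀ x ≥ Y, c₁ * x ^ (-δ) ≤ L x := by
    intro x hx
    have hx0 : 0 < x := lt_of_lt_of_le hY0 hx
    have hl1 : (1:ℝ) ≤ x / Y := (one_le_div hY0).2 hx
    have h1 := (hpot Y (le_refl Y) (x / Y) hl1).2
    rw [div_mul_cancel₀ _ (ne_of_gt hY0)] at h1
    have h2 : Real.exp (-δ) * (x / Y) ^ (-δ) * L Y ≤ L x := by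
      rw [← le_div_iff₀ hLY]; exact h1
    have h3 : (x / Y) ^ (-δ) = x ^ (-δ) * Y ^ δ := by
      rw [Real.div_rpow hx0.le hY0.le, Real.rpow_neg hY0.le, div_eq_mul_inv, inv_inv]
    calc c₁ * x ^ (-δ) = Real.exp (-δ) * (x ^ (-δ) * Y ^ δ) * L Y := by
          rw [hc₁def]; ring
      _ = Real.exp (-δ) * (x / Y) ^ (-δ) * L Y := by rw [h3]
      _ ≤ L x := h2
  -- upper Potter-type bound for ratios with small argument
  have hupper : ∀ s x : ℝ, 0 < s → s ≤ 1 → Y ≤ x * s →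
      L (x * s) / L x ≤ Real.exp δ * s ^ (-δ) := by
    intro s x hs0 hs1 hY2
    have hxs0 : 0 < x * s := lt_of_lt_of_le hY0 hY2
    have hx0 : 0 < x := by nlinarith
    have hLx : 0 < L x := hLpos x hx0
    have hLxs : 0 < L (x * s) := hLpos _ hxs0
    have hl1 : (1:ℝ) ≤ 1 / s := by rw [le_div_iff₀ hs0]; linarith
    have h1 := (hpot (x * s) hY2 (1 / s) hl1).2
    have he : 1 / s * (x * s) = x := by field_simp
    rw [he] at h1
    have hrs : (1 / s) ^ (-δ) = s ^ δ := by
      rw [one_div, Real.inv_rpow hs0.le, Real.rpow_neg hs0.le, inv_inv]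
    rw [hrs] at h1
    have ha : 0 < Real.exp (-δ) * s ^ δ := by positivity
    have h3 : Real.exp (-δ) * s ^ δ * L (x * s) ≤ L x := (le_div_iff₀ hLxs).1 h1
    rw [div_le_iff₀ hLx]
    have hainv : (Real.exp (-δ) * s ^ δ)⁻¹ = Real.exp δ * s ^ (-δ) := by
      rw [mul_inv, ← Real.exp_neg, neg_neg, Real.rpow_neg hs0.le]
    calc L (x * s) ≤ L x / (Real.exp (-δ) * s ^ δ) :=
          (le_div_iff₀ ha).2 (by rw [mul_comm]; exact h3)
      _ = Real.exp δ * s ^ (-δ) * L x := by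
          rw [div_eq_mul_inv, hainv]; ring
  set μ : Measure ℝ := volume.restrict (Ioc (0:ℝ) 1) with hμdef
  set F : ℝ → ℝ → ℝ :=
    fun x => (Ioi (A₀ / x)).indicator (fun s => s ^ α * (L (x * s) / L x)) with hFdef
  set C : ℝ := Real.exp δ + M * Y ^ δ / c₁ with hCdef
  have hC1 : Real.exp δ ≤ C := le_add_of_nonneg_right (by positivity)
  have hC2 : M * Y ^ δ / c₁ ≤ C := le_add_of_nonneg_left (Real.exp_pos δ).le
  have hC0 : 0 < C := lt_of_lt_of_le (Real.exp_pos δ) hC1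
  -- ratio bound
  have hratio : ∀ x ≥ Y, ∀ s : ℝ, 0 < s → s ≤ 1 → A₀ / x < s →
      L (x * s) / L x ≤ C * s ^ (-δ) := by
    intro x hx s hs0 hs1 hind
    have hx0 : 0 < x := lt_of_lt_of_le hY0 hx
    by_cases hY2 : Y ≤ x * s
    · exact le_trans (hupper s x hs0 hs1 hY2)
        (mul_le_mul_of_nonneg_right hC1 (Real.rpow_nonneg hs0.le _))
    · push_neg at hY2
      rw [div_lt_iff₀ hx0] at hind
      have hsx : A₀ < x * s := by linarith [mul_comm s x, hind]
      have hLxsM : L (x * s) ≤ M := hM _ ⟨hsx.le, hY2.le⟩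
      have hLxlow : c₁ * x ^ (-δ) ≤ L x := hlow x hx
      have hLx0 : 0 < L x := hLpos x hx0
      have hd0 : 0 < c₁ * x ^ (-δ) := by positivity
      have h1 : L (x * s) / L x ≤ M / (c₁ * x ^ (-δ)) :=
        div_le_div₀ hM0.le hLxsM hd0 hLxlow
      have hxle : x ≤ Y / s := by rw [le_div_iff₀ hs0]; exact hY2.le
      have h2 : x ^ δ ≤ Y ^ δ * s ^ (-δ) := by
        calc x ^ δ ≤ (Y / s) ^ δ := Real.rpow_le_rpow hx0.le hxle hδ.le
          _ = Y ^ δ * s ^ (-δ) := by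
              rw [Real.div_rpow hY0.le hs0.le, Real.rpow_neg hs0.le, div_eq_mul_inv]
      have hxδ : (0:ℝ) < x ^ δ := Real.rpow_pos_of_pos hx0 δ
      have h3 : M / (c₁ * x ^ (-δ)) = M / c₁ * x ^ δ := by
        rw [Real.rpow_neg hx0.le]
        field_simp
      calc L (x * s) / L x ≤ M / c₁ * x ^ δ := by rw [← h3]; exact h1
        _ ≤ M / c₁ * (Y ^ δ * s ^ (-δ)) :=
            mul_le_mul_of_nonneg_left h2 (by positivity)
        _ = M * Y ^ δ / c₁ * s ^ (-δ) := by ring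
        _ ≤ C * s ^ (-δ) := mul_le_mul_of_nonneg_right hC2 (Real.rpow_nonneg hs0.le _)
  -- norm bound for F
  have hbd : ∀ x ≥ Y, ∀ s ∈ Ioc (0:ℝ) 1, ‖F x s‖ ≤ C * s ^ (α - δ) := by
    intro x hx s hs
    obtain ⟨hs0, hs1⟩ := hs
    have hx0 : 0 < x := lt_of_lt_of_le hY0 hx
    simp only [hFdef]
    by_cases hind : A₀ / x < s
    · rw [indicator_of_mem (mem_Ioi.2 hind)]
      have hsx : 0 < x * s := by positivity
      have hLxs0 : 0 < L (x * s) := hLpos _ hsx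
      have hLx0 : 0 < L x := hLpos x hx0
      have hnn : 0 ≤ s ^ α * (L (x * s) / L x) := by positivity
      rw [Real.norm_eq_abs, abs_of_nonneg hnn]
      calc s ^ α * (L (x * s) / L x) ≤ s ^ α * (C * s ^ (-δ)) :=
            mul_le_mul_of_nonneg_left (hratio x hx s hs0 hs1 hind)
              (Real.rpow_nonneg hs0.le _)
        _ = C * s ^ (α - δ) := by
            rw [show α - δ = α + (-δ) by ring, Real.rpow_add hs0]; ring
    · rw [indicator_of_notMem (by simpa using hind)]
      rw [norm_zero]
      exact mul_nonneg hC0.le (Real.rpow_nonneg hs0.le _)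
  -- measurability
  have hFmeas : ∀ x : ℝ, AEStronglyMeasurable (F x) μ := by
    intro x
    have hmeas : Measurable fun s : ℝ => s ^ α * (L (x * s) / L x) := by
      exact ((measurable_id (α := ℝ)).pow_const α).mul
        ((hLmeas.comp (measurable_const_mul x)).div_const _)
    simp only [hFdef]
    exact ((hmeas.indicator measurableSet_Ioi).stronglyMeasurable).aestronglyMeasurable
  -- bound integrable
  have hgint : Integrable (fun s => C * s ^ (α - δ)) μ := by
    rw [hμdef]
    have h1 : IntervalIntegrable (fun s : ℝ => s ^ (α - δ)) volume 0 1 :=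
      intervalIntegral.intervalIntegrable_rpow' hαδ
    have h2 := h1.const_mul C
    rw [intervalIntegrable_iff_integrableOn_Ioc_of_le zero_le_one] at h2
    exact h2
  -- pointwise limit
  have hlim : ∀ s ∈ Ioc (0:ℝ) 1, Tendsto (fun x => F x s) atTop (𝓝 (s ^ α)) := by
    intro s hs
    obtain ⟨hs0, _⟩ := hs
    have h1 : Tendsto (fun x => s ^ α * (L (s * x) / L x)) atTop (𝓝 (s ^ α * 1)) :=
      tendsto_const_nhds.mul (hslow s hs0)
    rw [mul_one] at h1
    apply h1.congr'
    filter_upwards [eventually_gt_atTop (A₀ / s), eventually_gt_atTop (0:ℝ)] with x hx1 hx0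
    have hind : A₀ / x < s := by
      rw [div_lt_iff₀ hx0]
      rw [div_lt_iff₀ hs0] at hx1
      linarith [mul_comm x s, hx1]
    simp only [hFdef]
    rw [indicator_of_mem (mem_Ioi.2 hind), mul_comm x s]
  -- value of limit integral
  have hval : ∫ s, s ^ α ∂μ = 1 / (α + 1) := by
    rw [hμdef, ← intervalIntegral.integral_of_le zero_le_one, integral_rpow (Or.inl hα),
      Real.one_rpow, Real.zero_rpow (by linarith : α + 1 ≠ 0)]
    norm_num
  -- the key identity
  have heq : ∀ x : ℝ, A₀ < x → 0 < x →
      (∫ t in Ioc A₀ x, t ^ α * L t) / (x ^ (α + 1) * L x) = ∫ s, F x s ∂μ := by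
    intro x hxA hx0
    have hLx0 : 0 < L x := hLpos x hx0
    have hax0 : 0 < A₀ / x := div_pos hA₀ hx0
    have hax1 : A₀ / x < 1 := (div_lt_one hx0).2 hxA
    have hxne : x ≠ 0 := ne_of_gt hx0
    have hset : Ioi (A₀ / x) ∩ Ioc 0 1 = Ioc (A₀ / x) 1 := by
      rw [inter_comm, Ioc_inter_Ioi, sup_of_le_right hax0.le]
    have hRHS : ∫ s, F x s ∂μ = ∫ s in Ioc (A₀ / x) 1, s ^ α * (L (x * s) / L x) := by
      simp only [hFdef, hμdef]
      rw [integral_indicator measurableSet_Ioi,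
        Measure.restrict_restrict measurableSet_Ioi, hset]
    rw [hRHS, ← intervalIntegral.integral_of_le hax1.le]
    have e2 : (∫ s in (A₀ / x)..1, (x * s) ^ α * L (x * s))
        = x⁻¹ * ∫ t in A₀..x, t ^ α * L t := by
      have h := intervalIntegral.integral_comp_mul_left
        (a := A₀ / x) (b := 1) (fun t => t ^ α * L t) hxne
      rw [show x * (A₀ / x) = A₀ by field_simp, mul_one, smul_eq_mul] at h
      exact h
    have key : (∫ s in (A₀ / x)..1, s ^ α * (L (x * s) / L x))
        = x ^ (-α) * (x⁻¹ * ∫ t in A₀..x, t ^ α * L t) / L x := by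
      calc (∫ s in (A₀ / x)..1, s ^ α * (L (x * s) / L x))
          = ∫ s in (A₀ / x)..1, (x ^ (-α) * ((x * s) ^ α * L (x * s))) / L x := by
            apply intervalIntegral.integral_congr
            intro s hs
            rw [uIcc_of_le hax1.le] at hs
            have hs0 : 0 < s := lt_of_lt_of_le hax0 hs.1
            show s ^ α * (L (x * s) / L x) = x ^ (-α) * ((x * s) ^ α * L (x * s)) / L x
            rw [Real.mul_rpow hx0.le hs0.le, Real.rpow_neg hx0.le]
            have hxα : (0:ℝ) < x ^ α := Real.rpow_pos_of_pos hx0 α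
            field_simp
            try ring
        _ = (∫ s in (A₀ / x)..1, x ^ (-α) * ((x * s) ^ α * L (x * s))) / L x :=
            intervalIntegral.integral_div _ _
        _ = (x ^ (-α) * ∫ s in (A₀ / x)..1, (x * s) ^ α * L (x * s)) / L x := by
            rw [intervalIntegral.integral_const_mul]
        _ = x ^ (-α) * (x⁻¹ * ∫ t in A₀..x, t ^ α * L t) / L x := by rw [e2]
    rw [key, intervalIntegral.integral_of_le hxA.le]
    have hxα : (0:ℝ) < x ^ α := Real.rpow_pos_of_pos hx0 α
    rw [Real.rpow_add_one hxne, Real.rpow_neg hx0.le]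
    field_simp
    try ring
  -- dominated convergence
  have hmain := tendsto_integral_filter_of_dominated_convergence (μ := μ)
    (l := (atTop : Filter ℝ)) (F := F) (f := fun s : ℝ => s ^ α)
    (fun s => C * s ^ (α - δ))
    (Eventually.of_forall hFmeas)
    (by
      filter_upwards [eventually_ge_atTop Y] with x hx
      rw [hμdef]
      exact (ae_restrict_mem measurableSet_Ioc).mono (fun s hs => hbd x hx s hs))
    hgint
    (by
      rw [hμdef]
      exact (ae_restrict_mem measurableSet_Ioc).mono (fun s hs => hlim s hs))
  rw [hval] at hmain
  apply hmain.congr'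
  filter_upwards [eventually_ge_atTop Y, eventually_gt_atTop A₀, eventually_gt_atTop (0:ℝ)]
    with x hx hxA hx0
  exact (heq x hxA hx0).symm
end

section
/- Let L : (0,∞) → (0,∞) be measurable and a ∈ ℝ with ∫_0^∞ t^{-a-1} L(t) dt = 1/K for some K ∈ (0,∞). Then as τ → 0⁺, ∫_0^1 u^{a-1/2} (1-u)^{-a-1} L((1/τ²)(1/u - 1)) du = K^{-1} τ^{-2a} (1+o(1)); equivalently, τ^{2a} ∫_0^1 u^{a-1/2} (1-u)^{-a-1} L((1/τ²)(1/u - 1)) du → 1/K as τ → 0⁺. -/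
/-!
The substitution `t = τ⁻² (1/u - 1)`, i.e. `u = 1 / (1 + τ² t)`, turns
`τ^(2a) ∫_0^1 u^(a-1/2) (1-u)^(-a-1) L(τ⁻² (1/u - 1)) du` into
`∫_0^∞ t^(-a-1) L(t) (1 + τ² t)^(-1/2) dt`. The weight `(1 + τ² t)^(-1/2)` lies in `(0, 1]`
and tends to `1` pointwise as `τ → 0`, so dominated convergence gives the limit
`∫_0^∞ t^(-a-1) L(t) dt`.
-/

open MeasureTheory Filter Set Topology

theorem tendsto_setIntegral_mul_one_add_sq_mul_rpow {g : ℝ → ℝ} (hg : IntegrableOn g (Ioi 0))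
    {s : ℝ} (hs : s ≤ 0) :
    Tendsto (fun τ : ℝ => ∫ t in Ioi 0, g t * (1 + τ ^ 2 * t) ^ s) (𝓝 0)
      (𝓝 (∫ t in Ioi 0, g t)) := by
  refine tendsto_integral_filter_of_dominated_convergence (fun t => ‖g t‖) ?_ ?_ hg.norm ?_
  · exact .of_forall fun τ => hg.aestronglyMeasurable.mul (by fun_prop : Measurable fun t : ℝ =>
      (1 + τ ^ 2 * t) ^ s).aestronglyMeasurable
  · refine .of_forall fun τ => (ae_restrict_iff' measurableSet_Ioi).2 (.of_forall fun t ht => ?_)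
    have hone : 1 ≤ 1 + τ ^ 2 * t := le_add_of_nonneg_right (by positivity [ht.out.le])
    rw [norm_mul, Real.norm_of_nonneg (Real.rpow_nonneg (by linarith) s)]
    exact mul_le_of_le_one_right (norm_nonneg _) (Real.rpow_le_one_of_one_le_of_nonpos hone hs)
  · refine (ae_restrict_iff' measurableSet_Ioi).2 (.of_forall fun t ht => ?_)
    have : Continuous fun τ : ℝ => (1 + τ ^ 2 * t) ^ s :=
      (by fun_prop : Continuous fun τ : ℝ => 1 + τ ^ 2 * t).rpow_const
        fun τ => .inl (by positivity [ht.out.le])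
    simpa using (this.tendsto 0).const_mul (g t)

theorem image_mul_one_div_sub_one_Ioo {c : ℝ} (hc : 0 < c) :
    (fun u : ℝ => c * (1 / u - 1)) '' Ioo 0 1 = Ioi 0 := by
  ext t
  constructor
  · rintro ⟨u, ⟨hu0, hu1⟩, rfl⟩
    exact mul_pos hc (sub_pos.2 ((one_lt_div hu0).2 hu1))
  · intro (ht : 0 < t)
    refine ⟨c / (c + t), ⟨by positivity, (div_lt_one (by positivity)).2 (by linarith)⟩, ?_⟩
    field_simp
    ring

theorem integral_Ioi_eq_integral_Ioo_mul_one_div_sub_one {c : ℝ} (hc : 0 < c) (F : ℝ → ℝ) :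
    ∫ t in Ioi 0, F t = ∫ u in Ioo 0 1, c / u ^ 2 * F (c * (1 / u - 1)) := by
  have hderiv : ∀ u ∈ Ioo (0 : ℝ) 1,
      HasDerivWithinAt (fun u => c * (1 / u - 1)) (-(c / u ^ 2)) (Ioo 0 1) u := by
    intro u hu
    have := ((hasDerivAt_inv hu.1.ne').sub_const 1).const_mul c
    rw [show -(c / u ^ 2) = c * -(u ^ 2)⁻¹ by ring]
    simpa only [one_div] using this.hasDerivWithinAt
  have hinj : InjOn (fun u : ℝ => c * (1 / u - 1)) (Ioo 0 1) := by
    intro u _ v _ h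
    simpa using mul_left_cancel₀ hc.ne' h
  rw [← image_mul_one_div_sub_one_Ioo hc,
    integral_image_eq_integral_abs_deriv_smul measurableSet_Ioo hderiv hinj]
  refine setIntegral_congr_fun measurableSet_Ioo fun u hu => ?_
  rw [abs_neg, abs_of_pos (by positivity [hu.1]), smul_eq_mul]

theorem jacobian_mul_kernel_eq {τ u : ℝ} (a : ℝ) (hτ : 0 < τ) (hu0 : 0 < u) (hu1 : u < 1) :
    1 / τ ^ 2 / u ^ 2 * (((1 / τ ^ 2) * (1 / u - 1)) ^ (-a - 1) *
      (1 + τ ^ 2 * ((1 / τ ^ 2) * (1 / u - 1))) ^ (-(1 : ℝ) / 2)) =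
      τ ^ (2 * a) * (u ^ (a - 1 / 2) * (1 - u) ^ (-a - 1)) := by
  have hτ2 : 0 < τ ^ 2 := by positivity
  have h1u : 0 < 1 - u := by linarith
  have ht : (1 / τ ^ 2) * (1 / u - 1) = (1 - u) * (τ ^ 2)⁻¹ * u⁻¹ := by field_simp
  have hw : 1 + τ ^ 2 * ((1 / τ ^ 2) * (1 / u - 1)) = u⁻¹ := by field_simp; ring
  have hτa : τ ^ (2 * a) = (τ ^ 2) ^ a := by
    rw [Real.rpow_mul hτ.le, Real.rpow_two]
  rw [hw, ht, hτa, Real.mul_rpow (by positivity) (by positivity),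
    Real.mul_rpow h1u.le (by positivity), Real.inv_rpow hτ2.le, Real.inv_rpow hu0.le,
    Real.inv_rpow hu0.le, Real.rpow_sub_one hτ2.ne', Real.rpow_sub_one hu0.ne',
    Real.rpow_sub hu0, Real.rpow_neg hτ2.le, Real.rpow_neg hu0.le,
    show -(1 : ℝ) / 2 = -(1 / 2) by ring, Real.rpow_neg hu0.le]
  have : 0 < u ^ a := by positivity
  have : 0 < u ^ (1 / 2 : ℝ) := by positivity
  have : 0 < (τ ^ 2) ^ a := by positivity
  field_simp
  rw [← Real.sqrt_eq_rpow, Real.sq_sqrt hu0.le]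

theorem key_lemma_A5_general (L : ℝ → ℝ) (a K : ℝ)
    (hint : IntegrableOn (fun t => t ^ (-a - 1) * L t) (Ioi (0:ℝ)))
    (heq : ∫ t in Ioi (0:ℝ), t ^ (-a - 1) * L t = 1 / K) :
    Tendsto
      (fun τ : ℝ =>
        τ ^ (2 * a) *
          ∫ u in Ioo (0:ℝ) 1,
            u ^ (a - 1/2) * (1 - u) ^ (-a - 1) * L ((1 / τ ^ 2) * (1 / u - 1)))
      (𝓝[>] 0) (𝓝 (1 / K)) := by
  rw [← heq]
  refine ((tendsto_setIntegral_mul_one_add_sq_mul_rpow hint (s := -(1 : ℝ) / 2)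
    (by norm_num)).mono_left nhdsWithin_le_nhds).congr' ?_
  filter_upwards [self_mem_nhdsWithin] with τ (hτ : 0 < τ)
  rw [integral_Ioi_eq_integral_Ioo_mul_one_div_sub_one (by positivity : 0 < 1 / τ ^ 2),
    ← integral_const_mul]
  refine setIntegral_congr_fun measurableSet_Ioo fun u hu => ?_
  linear_combination L ((1 / τ ^ 2) * (1 / u - 1)) * jacobian_mul_kernel_eq a hτ hu.1 hu.2

/-- Lemma A.5: if `∫_0^∞ t^(-a-1) L(t) dt = 1/K`, then
`τ^(2a) ∫_0^1 u^(a-1/2) (1-u)^(-a-1) L((1/τ²)(1/u - 1)) du → 1/K` as `τ → 0⁺`. -/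
theorem key_lemma_A5 (L : ℝ → ℝ) (a K : ℝ) (hK : 0 < K)
    (hLmeas : Measurable L)
    (hLpos : ∀ t > 0, 0 < L t)
    (hint : IntegrableOn (fun t => t ^ (-a - 1) * L t) (Ioi (0:ℝ)))
    (heq : ∫ t in Ioi (0:ℝ), t ^ (-a - 1) * L t = 1 / K) :
    Tendsto
      (fun τ : ℝ =>
        τ ^ (2 * a) *
          ∫ u in Ioo (0:ℝ) 1,
            u ^ (a - 1/2) * (1 - u) ^ (-a - 1) * L ((1 / τ ^ 2) * (1 / u - 1)))
      (𝓝[>] 0) (𝓝 (1 / K)) :=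
  key_lemma_A5_general L a K hint heq
end

section
/- Let π(κ | x, τ) ∝ κ^{a-1/2} (1-κ)^{-a-1} L((1/τ²)(1/κ - 1)) e^{-κx²/2} on (0,1), where K ∫_0^∞ t^{-a-1} L(t) dt = 1 with K > 0. Then for any fixed ε ∈ (0,1) and τ > 0, P(κ < ε | x, τ) ≤ K e^{x²/2} (∫_{(1/τ²)(1/ε - 1)}^∞ t^{-a-1} L(t) dt) · (1+o(1)), where the o(1) term is uniform in x and tends to 0 as τ → 0. -/
open MeasureTheory Filter Set Topology

/-!
Substituting `κ = (1 + τ²t)⁻¹` turns the posterior into `(τ²)^(-a)` times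
`(1 + τ²t)^(-1/2) e^(-x²/(2(1 + τ²t))) t^(-a-1) L(t)` on `t > 0`, and the event `κ < ε` into
`t > (1/τ²)(1/ε - 1)`. Both extra factors are at most `1`, so the numerator is at most the tail
integral of `t^(-a-1) L(t)`; the exponential is at least `e^(-x²/2)`, so the denominator is at least
`e^(-x²/2) D(τ)` with `D(τ) = ∫ (1 + τ²t)^(-1/2) t^(-a-1) L(t) dt`, and `D(τ) → 1/K` as `τ → 0` by
dominated convergence. Hence `1 + o(1) = (K D(τ))⁻¹`, which does not depend on `x`.
-/

/-- The unnormalized posterior density of the shrinkage coefficient `κ ∈ (0,1)`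
given observation `x` and global parameter `τ`. -/
noncomputable def postDens (a : ℝ) (L : ℝ → ℝ) (τ x κ : ℝ) : ℝ :=
  κ ^ (a - 1/2) * (1 - κ) ^ (-a - 1) * L ((1 / τ ^ 2) * (1 / κ - 1)) *
    Real.exp (-(κ * x ^ 2) / 2)

section InvOneAddMul

variable {s c : ℝ}

lemma image_inv_one_add_mul_Ioi (hs : 0 < s) (hc : 0 ≤ c) :
    (fun t => (1 + s * t)⁻¹) '' Ioi c = Ioo 0 (1 + s * c)⁻¹ := by
  ext κ
  constructor
  · rintro ⟨t, ht, rfl⟩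
    have ht : c < t := ht
    have : 0 < 1 + s * t := by nlinarith
    exact ⟨inv_pos.2 this, inv_strictAnti₀ (by positivity) (by gcongr)⟩
  · rintro ⟨hκ0, hκ⟩
    have hκ' : 1 + s * c < κ⁻¹ := lt_inv_of_lt_inv₀ hκ0 hκ
    refine ⟨(κ⁻¹ - 1) / s, (lt_div_iff₀ hs).2 (by linarith), ?_⟩
    simp only
    rw [mul_div_cancel₀ _ hs.ne', add_sub_cancel, inv_inv]

lemma integral_Ioo_eq_integral_Ioi_comp_inv_one_add_mul (hs : 0 < s) (hc : 0 ≤ c)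
    (g : ℝ → ℝ) :
    ∫ κ in Ioo 0 (1 + s * c)⁻¹, g κ = ∫ t in Ioi c, s / (1 + s * t) ^ 2 * g (1 + s * t)⁻¹ := by
  have hderiv : ∀ t ∈ Ioi c, HasDerivWithinAt (fun t => (1 + s * t)⁻¹)
      (-(s * 1) / (1 + s * t) ^ 2) (Ioi c) t := fun t (ht : c < t) =>
    (((hasDerivAt_id t).const_mul s).const_add 1).inv
      (by simp only [id]; nlinarith) |>.hasDerivWithinAt
  have hinj : InjOn (fun t => (1 + s * t)⁻¹) (Ioi c) := fun t _ u _ h => by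
    simpa [hs.ne'] using h
  rw [← image_inv_one_add_mul_Ioi hs hc,
    integral_image_eq_integral_abs_deriv_smul measurableSet_Ioi hderiv hinj]
  refine setIntegral_congr_fun measurableSet_Ioi fun t _ => ?_
  simp [abs_div, abs_of_pos hs]

end InvOneAddMul

/-- The posterior density in the variable `t = (1/τ²)(1/κ - 1)`, Jacobian included, up to the
constant factor `(τ²)^(-a)`. -/
noncomputable def postDensT (a : ℝ) (L : ℝ → ℝ) (τ x t : ℝ) : ℝ :=
  (1 + τ ^ 2 * t) ^ (-(1/2) : ℝ) * Real.exp (-((1 + τ ^ 2 * t)⁻¹ * x ^ 2) / 2) *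
    (t ^ (-a - 1) * L t)

lemma jacobian_mul_postDens {a τ x t : ℝ} {L : ℝ → ℝ} (hτ : τ ≠ 0) (ht : 0 < t) :
    τ ^ 2 / (1 + τ ^ 2 * t) ^ 2 * postDens a L τ x (1 + τ ^ 2 * t)⁻¹ =
      (τ ^ 2) ^ (-a) * postDensT a L τ x t := by
  rw [postDens, postDensT]
  set s := τ ^ 2
  set u := 1 + s * t
  have hs : 0 < s := by positivity
  have hu : 0 < u := by positivity
  have hL : 1 / s * (1 / u⁻¹ - 1) = t := by field_simp; ring
  have h1 : 1 - u⁻¹ = s * t * u⁻¹ := by field_simp; ring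
  have hs' : s * s ^ (-a - 1) = s ^ (-a) := by
    rw [mul_comm, ← Real.rpow_add_one hs.ne']; ring_nf
  have hu' : u ^ (-(1/2) : ℝ) * (u ^ 2 * u ^ (a - 1/2) * u ^ (-a - 1)) = 1 := by
    rw [← Real.rpow_natCast, ← Real.rpow_add hu, ← Real.rpow_add hu, ← Real.rpow_add hu]
    ring_nf; exact Real.rpow_zero u
  rw [hL, h1, Real.mul_rpow (by positivity) (by positivity), Real.mul_rpow hs.le ht.le,
    Real.inv_rpow hu.le, Real.inv_rpow hu.le, ← hs', eq_inv_of_mul_eq_one_left hu']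
  clear_value u s
  ring

section PostDensT

variable {a τ x : ℝ} {L : ℝ → ℝ}

lemma setIntegral_postDens_Ioo (hτ : τ ≠ 0) {c : ℝ} (hc : 0 ≤ c) :
    ∫ κ in Ioo 0 (1 + τ ^ 2 * c)⁻¹, postDens a L τ x κ =
      (τ ^ 2) ^ (-a) * ∫ t in Ioi c, postDensT a L τ x t := by
  rw [integral_Ioo_eq_integral_Ioi_comp_inv_one_add_mul (by positivity) hc,
    ← integral_const_mul]
  exact setIntegral_congr_fun measurableSet_Ioi fun t (ht : c < t) =>
    jacobian_mul_postDens hτ (hc.trans_lt ht)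

lemma postDensT_pos (hL : ∀ t > 0, 0 < L t) {t : ℝ} (ht : 0 < t) :
    0 < postDensT a L τ x t := by
  have := hL t ht
  unfold postDensT
  positivity

lemma postDensT_le (hL : ∀ t > 0, 0 < L t) {t : ℝ} (ht : 0 < t) :
    postDensT a L τ x t ≤ t ^ (-a - 1) * L t := by
  have hu : 1 ≤ 1 + τ ^ 2 * t := by nlinarith [sq_nonneg τ]
  have := hL t ht
  unfold postDensT
  refine mul_le_of_le_one_left (by positivity) (mul_le_one₀ ?_ (by positivity) ?_)
  · exact Real.rpow_le_one_of_one_le_of_nonpos hu (by norm_num)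
  · have : 0 ≤ (1 + τ ^ 2 * t)⁻¹ * x ^ 2 := mul_nonneg (inv_nonneg.2 (by linarith)) (sq_nonneg x)
    exact Real.exp_le_one_iff.2 (by linarith)

lemma exp_mul_postDensT_zero_le (hL : ∀ t > 0, 0 < L t) {t : ℝ} (ht : 0 < t) :
    Real.exp (-x ^ 2 / 2) * postDensT a L τ 0 t ≤ postDensT a L τ x t := by
  have hu : 1 ≤ 1 + τ ^ 2 * t := by nlinarith [sq_nonneg τ]
  have hinv : (1 + τ ^ 2 * t)⁻¹ * x ^ 2 ≤ x ^ 2 :=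
    mul_le_of_le_one_left (sq_nonneg x) (inv_le_one_of_one_le₀ hu)
  have := hL t ht
  calc Real.exp (-x ^ 2 / 2) * postDensT a L τ 0 t
      = (1 + τ ^ 2 * t) ^ (-(1/2) : ℝ) * Real.exp (-x ^ 2 / 2) * (t ^ (-a - 1) * L t) := by
        simp only [postDensT, ne_eq, OfNat.ofNat_ne_zero, not_false_eq_true, zero_pow, mul_zero,
          neg_zero, zero_div, Real.exp_zero, mul_one]
        ring
    _ ≤ postDensT a L τ x t := by
        unfold postDensT
        gcongr

lemma measurable_postDensT (hLm : Measurable L) : Measurable (postDensT a L τ x) := by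
  unfold postDensT
  fun_prop

lemma integrableOn_postDensT (hLm : Measurable L) (hL : ∀ t > 0, 0 < L t)
    (hint : IntegrableOn (fun t => t ^ (-a - 1) * L t) (Ioi 0)) {c : ℝ} (hc : 0 ≤ c) :
    IntegrableOn (postDensT a L τ x) (Ioi c) := by
  refine (hint.mono_set (Ioi_subset_Ioi hc)).mono'
    (measurable_postDensT hLm).aestronglyMeasurable ?_
  filter_upwards [ae_restrict_mem measurableSet_Ioi] with t (ht : c < t)
  have ht : 0 < t := hc.trans_lt ht
  rw [Real.norm_of_nonneg (postDensT_pos hL ht).le]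
  exact postDensT_le hL ht

lemma integral_postDensT_pos (hLm : Measurable L) (hL : ∀ t > 0, 0 < L t)
    (hint : IntegrableOn (fun t => t ^ (-a - 1) * L t) (Ioi 0)) :
    0 < ∫ t in Ioi 0, postDensT a L τ x t := by
  refine (setIntegral_pos_iff_support_of_nonneg_ae ?_
    (integrableOn_postDensT hLm hL hint le_rfl)).2 ?_
  · filter_upwards [ae_restrict_mem measurableSet_Ioi] with t ht
    exact (postDensT_pos hL ht).le
  · have : Ioi 0 ⊆ Function.support (postDensT a L τ x) ∩ Ioi 0 := fun t ht =>
      ⟨(postDensT_pos hL ht).ne', ht⟩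
    exact (Measure.measure_Ioi_pos volume 0).trans_le (measure_mono this)

lemma tendsto_integral_postDensT_zero (hLm : Measurable L) (hL : ∀ t > 0, 0 < L t)
    (hint : IntegrableOn (fun t => t ^ (-a - 1) * L t) (Ioi 0)) :
    Tendsto (fun τ => ∫ t in Ioi 0, postDensT a L τ 0 t) (𝓝 0)
      (𝓝 (∫ t in Ioi 0, t ^ (-a - 1) * L t)) := by
  refine tendsto_integral_filter_of_dominated_convergence _
    (Eventually.of_forall fun τ => (measurable_postDensT hLm).aestronglyMeasurable) ?_ hint ?_
  · refine Eventually.of_forall fun τ => ?_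
    filter_upwards [ae_restrict_mem measurableSet_Ioi] with t ht
    rw [Real.norm_of_nonneg (postDensT_pos hL ht).le]
    exact postDensT_le hL ht
  · refine ae_of_all _ fun t => ?_
    have : ContinuousAt (fun τ => postDensT a L τ 0 t) 0 := by
      unfold postDensT
      fun_prop (disch := norm_num)
    simpa [postDensT] using this.tendsto

lemma integral_postDensT_div_le (hLm : Measurable L) (hL : ∀ t > 0, 0 < L t)
    (hint : IntegrableOn (fun t => t ^ (-a - 1) * L t) (Ioi 0)) {c : ℝ} (hc : 0 ≤ c) :
    (∫ t in Ioi c, postDensT a L τ x t) / ∫ t in Ioi 0, postDensT a L τ x t ≤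
      Real.exp (x ^ 2 / 2) * (∫ t in Ioi c, t ^ (-a - 1) * L t) /
        ∫ t in Ioi 0, postDensT a L τ 0 t := by
  have hnum : ∫ t in Ioi c, postDensT a L τ x t ≤ ∫ t in Ioi c, t ^ (-a - 1) * L t :=
    setIntegral_mono_on (integrableOn_postDensT hLm hL hint hc) (hint.mono_set (Ioi_subset_Ioi hc))
      measurableSet_Ioi fun t (ht : c < t) => postDensT_le hL (hc.trans_lt ht)
  have hden : Real.exp (-x ^ 2 / 2) * ∫ t in Ioi 0, postDensT a L τ 0 t ≤
      ∫ t in Ioi 0, postDensT a L τ x t := by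
    rw [← integral_const_mul]
    exact setIntegral_mono_on ((integrableOn_postDensT hLm hL hint le_rfl).const_mul _)
      (integrableOn_postDensT hLm hL hint le_rfl) measurableSet_Ioi
      fun t ht => exp_mul_postDensT_zero_le hL ht
  have hpos : 0 < ∫ t in Ioi 0, postDensT a L τ 0 t := integral_postDensT_pos hLm hL hint
  have htail : 0 ≤ ∫ t in Ioi c, t ^ (-a - 1) * L t :=
    setIntegral_nonneg measurableSet_Ioi fun t (ht : c < t) =>
      have ht := hc.trans_lt ht
      (mul_pos (Real.rpow_pos_of_pos ht _) (hL t ht)).le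
  calc (∫ t in Ioi c, postDensT a L τ x t) / ∫ t in Ioi 0, postDensT a L τ x t
      ≤ (∫ t in Ioi c, t ^ (-a - 1) * L t) /
          (Real.exp (-x ^ 2 / 2) * ∫ t in Ioi 0, postDensT a L τ 0 t) :=
        div_le_div₀ htail hnum (by positivity) hden
    _ = _ := by
        rw [neg_div, Real.exp_neg]
        field_simp

lemma postDens_ratio_le (hLm : Measurable L) (hL : ∀ t > 0, 0 < L t)
    (hint : IntegrableOn (fun t => t ^ (-a - 1) * L t) (Ioi 0)) (hτ : τ ≠ 0) {ε : ℝ}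
    (hε : ε ∈ Ioo 0 1) :
    (∫ κ in Ioo 0 ε, postDens a L τ x κ) / ∫ κ in Ioo 0 1, postDens a L τ x κ ≤
      Real.exp (x ^ 2 / 2) * (∫ t in Ioi (1 / τ ^ 2 * (1 / ε - 1)), t ^ (-a - 1) * L t) /
        ∫ t in Ioi 0, postDensT a L τ 0 t := by
  obtain ⟨hε0, hε1⟩ := hε
  have hc : 0 ≤ 1 / τ ^ 2 * (1 / ε - 1) :=
    mul_nonneg (by positivity) (sub_nonneg.2 ((one_le_div hε0).2 hε1.le))
  have hnum := setIntegral_postDens_Ioo (a := a) (L := L) (x := x) hτ hc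
  have hden := setIntegral_postDens_Ioo (a := a) (L := L) (x := x) hτ le_rfl
  rw [show (1 + τ ^ 2 * (1 / τ ^ 2 * (1 / ε - 1)))⁻¹ = ε by field_simp; ring] at hnum
  rw [mul_zero, add_zero, inv_one] at hden
  rw [hnum, hden, mul_div_mul_left _ _ (by positivity)]
  exact integral_postDensT_div_le hLm hL hint hc

end PostDensT

theorem concentration_ineq_one_general (a K : ℝ) (L : ℝ → ℝ)
    (hLmeas : Measurable L)
    (hLpos : ∀ t > 0, 0 < L t)
    (hnorm : K * ∫ t in Ioi (0:ℝ), t ^ (-a - 1) * L t = 1) :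
    ∃ g : ℝ → ℝ, Tendsto g (𝓝[>] 0) (𝓝 0) ∧
      ∀ τ > 0, ∀ x : ℝ, ∀ ε ∈ Ioo (0:ℝ) 1,
        (∫ κ in Ioo (0:ℝ) ε, postDens a L τ x κ) /
            (∫ κ in Ioo (0:ℝ) 1, postDens a L τ x κ) ≤
          K * Real.exp (x ^ 2 / 2) *
            (∫ t in Ioi ((1 / τ ^ 2) * (1 / ε - 1)), t ^ (-a - 1) * L t) *
            (1 + g τ) := by
  have hK : K ≠ 0 := left_ne_zero_of_mul_eq_one hnorm
  have hint : IntegrableOn (fun t => t ^ (-a - 1) * L t) (Ioi 0) :=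
    Integrable.of_integral_ne_zero (right_ne_zero_of_mul_eq_one hnorm)
  refine ⟨fun τ => (K * ∫ t in Ioi 0, postDensT a L τ 0 t)⁻¹ - 1, ?_, fun τ hτ x ε hε => ?_⟩
  · have hlim := (tendsto_integral_postDensT_zero hLmeas hLpos hint).const_mul K
    rw [hnorm] at hlim
    simpa using ((hlim.inv₀ one_ne_zero).sub_const 1).mono_left nhdsWithin_le_nhds
  · have hpos := integral_postDensT_pos (τ := τ) (x := 0) hLmeas hLpos hint
    refine (postDens_ratio_le hLmeas hLpos hint hτ.ne' hε).trans_eq ?_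
    rw [add_sub_cancel]
    field_simp

/-- Theorem 4.1 (first concentration inequality): for any fixed `ε ∈ (0,1)` and `τ > 0`,
`P(κ < ε | x, τ) ≤ K e^{x²/2} (∫_{(1/τ²)(1/ε-1)}^∞ t^{-a-1} L(t) dt) (1 + o(1))`,
where the `o(1)` term is uniform in `x` and tends to `0` as `τ → 0⁺`. -/
theorem concentration_ineq_one (a K : ℝ) (ha : 0 < a) (hK : 0 < K) (L : ℝ → ℝ)
    (hLmeas : Measurable L)
    (hLpos : ∀ t > 0, 0 < L t)
    (hnorm : K * ∫ t in Ioi (0:ℝ), t ^ (-a - 1) * L t = 1) :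
    ∃ g : ℝ → ℝ, Tendsto g (𝓝[>] 0) (𝓝 0) ∧
      ∀ τ > 0, ∀ x : ℝ, ∀ ε ∈ Ioo (0:ℝ) 1,
        (∫ κ in Ioo (0:ℝ) ε, postDens a L τ x κ) /
            (∫ κ in Ioo (0:ℝ) 1, postDens a L τ x κ) ≤
          K * Real.exp (x ^ 2 / 2) *
            (∫ t in Ioi ((1 / τ ^ 2) * (1 / ε - 1)), t ^ (-a - 1) * L t) *
            (1 + g τ) :=
  concentration_ineq_one_general a K L hLmeas hLpos hnorm
end

section
/- Let X ~ N(0,1) under H₀, and suppose the decision rejects H₀ iff E(1-κ | X, τ) > 1/2, where the posterior satisfies the bound E(1-κ | x, τ) ≤ (A₀K/(a(1-a))) e^{x²/2} τ^{2a} L(1/τ²)(1+o(1)) uniformly in x as τ → 0. Then for a ∈ (0,1) and τ → 0, the type I error probability t₁ = P(E(1-κ|X,τ) > 1/2) satisfies t₁ ≤ (1/√(πa)) · (2A₀K/(a(1-a))) · τ^{2a} L(1/τ²) / √(log(1/τ²)) · (1+o(1)). -/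
open MeasureTheory ProbabilityTheory Filter Set Topology

/-- The posterior shrinkage weight `E(1-κ | x, τ)`. -/
noncomputable def postShrinkWeight (a : ℝ) (L : ℝ → ℝ) (τ x : ℝ) : ℝ :=
  (∫ κ in Ioo (0:ℝ) 1, (1 - κ) * postDens a L τ x κ) /
    (∫ κ in Ioo (0:ℝ) 1, postDens a L τ x κ)

theorem eventually_lt_measure_inter {α : Type*} [MeasurableSpace α] (μ : Measure α)
    {A : Set α} {S : ℕ → Set α} (hS : ∀ x ∈ A, ∀ᶠ n in atTop, x ∈ S n)
    {c : ENNReal} (hc : c < μ A) : ∀ᶠ n in atTop, c < μ (A ∩ S n) := by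
  set G : ℕ → Set α := fun n => A ∩ ⋂ m ≥ n, S m
  have hG : Monotone G := fun n n' hnn' x hx =>
    ⟨hx.1, mem_iInter₂.mpr fun m hm => mem_iInter₂.mp hx.2 m (hnn'.trans hm)⟩
  have hGA : ⋃ n, G n = A := by
    refine Subset.antisymm (iUnion_subset fun n => inter_subset_left) fun x hx => ?_
    obtain ⟨N, hN⟩ := eventually_atTop.mp (hS x hx)
    exact mem_iUnion.mpr ⟨N, hx, mem_iInter₂.mpr hN⟩
  have hlim := tendsto_measure_iUnion_atTop (μ := μ) hG
  rw [hGA] at hlim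
  filter_upwards [hlim.eventually_const_lt hc] with n hn
  exact hn.trans_le (measure_mono (inter_subset_inter_right A (iInter₂_subset n le_rfl)))

section UniformConvergence

variable {f : ℝ → ℝ}

theorem tendsto_shift_sub_of_measurable (hf : Measurable f)
    (hshift : ∀ t, Tendsto (fun u => f (u + t) - f u) atTop (𝓝 0))
    {u t : ℕ → ℝ} (hu : Tendsto u atTop atTop) (ht : ∀ᶠ n in atTop, t n ∈ Icc (0:ℝ) 1) :
    Tendsto (fun n => f (u n + t n) - f (u n)) atTop (𝓝 0) := by
  rw [Metric.tendsto_nhds]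
  intro δ hδ
  set good : ℝ → Set ℝ := fun w => {s | |f (w + s) - f w| < δ / 2}
  have hgood : ∀ w : ℕ → ℝ, Tendsto w atTop atTop → ∀ s, ∀ᶠ n in atTop, s ∈ good (w n) :=
    fun w hw s => by
      simpa [good, Real.dist_eq] using
        Metric.tendsto_nhds.mp ((hshift s).comp hw) (δ / 2) (half_pos hδ)
  have hv : Tendsto (fun n => u n + t n) atTop atTop :=
    tendsto_atTop_mono' _ (ht.mono fun n h => le_add_of_nonneg_right h.1) hu
  have hE := eventually_lt_measure_inter volume (fun s _ => hgood u hu s)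
    (A := Icc 0 2) (c := ENNReal.ofReal (3/2))
    (by rw [Real.volume_Icc]; exact ENNReal.ofReal_lt_ofReal_iff'.mpr (by norm_num))
  have hE' := eventually_lt_measure_inter volume (fun s _ => hgood _ hv s)
    (A := Icc (-1) 2) (c := ENNReal.ofReal (5/2))
    (by rw [Real.volume_Icc]; exact ENNReal.ofReal_lt_ofReal_iff'.mpr (by norm_num))
  filter_upwards [hE, hE', ht] with n hEn hE'n htn
  -- A point `s` good for both `u n` and `u n + t n` links `f (u n)` to `f (u n + t n)`;
  -- it exists because the two good sets have total measure `> 3/2 + 5/2 = |[-1, 3]|`.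
  obtain ⟨s, ⟨-, hs⟩, ⟨-, hs'⟩⟩ : (Icc 0 2 ∩ good (u n) ∩
      (· - t n) ⁻¹' (Icc (-1) 2 ∩ good (u n + t n))).Nonempty := by
    refine nonempty_inter_of_measure_lt_add volume ?_ (u := Icc (-1) 3) ?_ ?_ ?_
    · exact (measurableSet_Icc.inter (measurableSet_lt (by fun_prop) measurable_const)).preimage
        (measurable_sub_const _)
    · exact fun s hs => ⟨by linarith [hs.1.1], by linarith [hs.1.2]⟩
    · exact fun s hs => ⟨by linarith [hs.1.1, htn.1], by linarith [hs.1.2, htn.2]⟩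
    · simp only [sub_eq_add_neg, measure_preimage_add_right]
      calc volume (Icc (-1 : ℝ) 3) = ENNReal.ofReal (3/2) + ENNReal.ofReal (5/2) := by
            rw [Real.volume_Icc, ← ENNReal.ofReal_add (by norm_num) (by norm_num)]; norm_num
        _ < _ := ENNReal.add_lt_add hEn hE'n
  simp only [good, mem_ofPred, add_add_sub_cancel, abs_lt] at hs hs'
  rw [Real.dist_eq, sub_zero, abs_lt]
  constructor <;> linarith

theorem tendstoUniformlyOn_shift_sub_of_measurable (hf : Measurable f)
    (hshift : ∀ t, Tendsto (fun u => f (u + t) - f u) atTop (𝓝 0)) :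
    TendstoUniformlyOn (fun u t => f (u + t) - f u) 0 atTop (Icc 0 1) := by
  rw [tendstoUniformlyOn_iff_tendsto, tendsto_iff_seq_tendsto]
  intro x hx
  rw [tendsto_uniformity_iff_dist_tendsto_zero]
  have hu : Tendsto (fun n => (x n).1) atTop atTop := tendsto_fst.comp hx
  have ht : ∀ᶠ n in atTop, (x n).2 ∈ Icc (0:ℝ) 1 :=
    tendsto_principal.mp (tendsto_snd.comp hx)
  simpa [dist_comm, Real.dist_eq] using (tendsto_shift_sub_of_measurable hf hshift hu ht).norm

theorem abs_sub_le_mul_of_abs_shift_sub_le {N δ : ℝ} (hδ : 0 ≤ δ)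
    (hN : ∀ u ≥ N, ∀ t ∈ Icc (0:ℝ) 1, |f (u + t) - f u| ≤ δ) :
    ∀ u ≥ N, |f u - f N| ≤ δ * (u - N + 1) := by
  have key : ∀ k : ℕ, ∀ t ∈ Icc (0:ℝ) 1, |f (N + k + t) - f N| ≤ δ * (k + 1) := by
    intro k
    induction k with
    | zero => simpa using hN N le_rfl
    | succ k ih =>
      intro t ht
      have h1 := hN (N + k + 1) (by linarith [k.cast_nonneg (α := ℝ)]) t ht
      have h2 := ih 1 ⟨zero_le_one, le_rfl⟩
      push_cast
      rw [← add_assoc]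
      calc |f (N + k + 1 + t) - f N|
          ≤ |f (N + k + 1 + t) - f (N + k + 1)| + |f (N + k + 1) - f N| := abs_sub_le _ _ _
        _ ≤ δ + δ * (k + 1) := add_le_add h1 h2
        _ = δ * (k + 1 + 1) := by ring
  intro u hu
  set k := ⌊u - N⌋₊
  have hk : (k : ℝ) ≤ u - N := Nat.floor_le (by linarith)
  have hk' : u - N < k + 1 := Nat.lt_floor_add_one _
  have := key k (u - N - k) ⟨by linarith, by linarith⟩
  rw [show N + k + (u - N - k) = u by ring] at this
  exact this.trans (mul_le_mul_of_nonneg_left (by linarith) hδ)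

theorem isLittleO_id_of_tendstoUniformlyOn
    (h : TendstoUniformlyOn (fun u t => f (u + t) - f u) 0 atTop (Icc 0 1)) :
    f =o[atTop] id := by
  refine Asymptotics.isLittleO_iff.mpr fun c hc => ?_
  obtain ⟨N, hN⟩ := eventually_atTop.mp (Metric.tendstoUniformlyOn_iff.mp h (c / 2) (half_pos hc))
  have hgrowth := abs_sub_le_mul_of_abs_shift_sub_le (f := f) (N := N) (half_pos hc).le
    fun u hu t ht => by simpa [dist_comm, Real.dist_eq] using (hN u hu t ht).le
  filter_upwards [eventually_ge_atTop N, eventually_ge_atTop 0,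
    eventually_ge_atTop (2 * |f N| / c + 1 - N)] with u huN hu0 hu
  have h1 : 2 * |f N| ≤ c * (u - 1 + N) := by rw [← div_le_iff₀' hc]; linarith
  have h2 := abs_sub_abs_le_abs_sub (f u) (f N)
  rw [Real.norm_eq_abs, Real.norm_eq_abs, id, abs_of_nonneg hu0]
  linarith [hgrowth u huN]

end UniformConvergence

theorem isLittleO_log_comp_log_of_slowlyVarying {L : ℝ → ℝ} (hLmeas : Measurable L)
    (hLpos : ∀ t > 0, 0 < L t)
    (hslow : ∀ c > 0, Tendsto (fun x => L (c * x) / L x) atTop (𝓝 1)) :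
    (fun x => Real.log (L x)) =o[atTop] Real.log := by
  set f : ℝ → ℝ := fun u => Real.log (L (Real.exp u))
  have hshift : ∀ t, Tendsto (fun u => f (u + t) - f u) atTop (𝓝 0) := by
    intro t
    have h := ((Real.continuousAt_log one_ne_zero).tendsto.comp
      ((hslow _ (Real.exp_pos t)).comp Real.tendsto_exp_atTop))
    rw [Real.log_one] at h
    refine h.congr fun u => ?_
    simp only [Function.comp_apply, f, Real.exp_add, mul_comm (Real.exp u)]
    exact Real.log_div (hLpos _ (by positivity)).ne' (hLpos _ (Real.exp_pos u)).ne'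
  have hf : Measurable f := Real.measurable_log.comp (hLmeas.comp Real.measurable_exp)
  refine ((isLittleO_id_of_tendstoUniformlyOn (tendstoUniformlyOn_shift_sub_of_measurable hf
    hshift)).comp_tendsto Real.tendsto_log_atTop).congr' ?_ EventuallyEq.rfl
  filter_upwards [eventually_gt_atTop 0] with x hx
  simp [f, Real.exp_log hx]

theorem gaussianPDFReal_zero_one (x : ℝ) :
    gaussianPDFReal 0 1 x = (Real.sqrt (2 * Real.pi))⁻¹ * Real.exp (-x ^ 2 / 2) := by
  simp [gaussianPDFReal]

theorem hasDerivAt_gaussianPDFReal_zero_one (x : ℝ) :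
    HasDerivAt (gaussianPDFReal 0 1) (-(x * gaussianPDFReal 0 1 x)) x := by
  have h : HasDerivAt (fun x : ℝ => -x ^ 2 / 2) (-x) x :=
    ((hasDerivAt_pow 2 x).neg.div_const 2).congr_deriv (by ring)
  rw [funext gaussianPDFReal_zero_one]
  exact (h.exp.const_mul _).congr_deriv (by ring)

theorem integrable_mul_gaussianPDFReal_zero_one :
    Integrable (fun x => x * gaussianPDFReal 0 1 x) := by
  simp only [gaussianPDFReal_zero_one, mul_left_comm _ (Real.sqrt _)⁻¹]
  refine Integrable.const_mul ?_ _
  simpa [neg_div, div_eq_inv_mul] using integrable_mul_exp_neg_mul_sq (b := 1 / 2) (by norm_num)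

theorem integral_Ioi_mul_gaussianPDFReal_zero_one (ζ : ℝ) :
    ∫ x in Ioi ζ, x * gaussianPDFReal 0 1 x = gaussianPDFReal 0 1 ζ := by
  have hlim : Tendsto (fun x => -gaussianPDFReal 0 1 x) atTop (𝓝 0) := by
    have h : Tendsto (fun x : ℝ => -x ^ 2 / 2) atTop atBot :=
      (tendsto_neg_atTop_atBot.comp (tendsto_pow_atTop two_ne_zero)).atBot_div_const two_pos
    simpa [gaussianPDFReal_zero_one] using
      ((Real.tendsto_exp_atBot.comp h).const_mul (Real.sqrt (2 * Real.pi))⁻¹).neg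
  have := integral_Ioi_of_hasDerivAt_of_tendsto' (a := ζ)
    (fun x _ => (hasDerivAt_gaussianPDFReal_zero_one x).neg)
    (by simpa using integrable_mul_gaussianPDFReal_zero_one.integrableOn) hlim
  simpa using this

theorem gaussianReal_Ioi_le {ζ : ℝ} (hζ : 0 < ζ) :
    (gaussianReal 0 1 (Ioi ζ)).toReal ≤ gaussianPDFReal 0 1 ζ / ζ := by
  rw [gaussianReal_apply_eq_integral 0 one_ne_zero, ENNReal.toReal_ofReal
    (setIntegral_nonneg measurableSet_Ioi fun x _ => gaussianPDFReal_nonneg 0 1 x),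
    ← integral_Ioi_mul_gaussianPDFReal_zero_one, le_div_iff₀ hζ, ← integral_mul_const]
  refine setIntegral_mono_on ((integrable_gaussianPDFReal 0 1).integrableOn.mul_const ζ)
    integrable_mul_gaussianPDFReal_zero_one.integrableOn measurableSet_Ioi fun x hx => ?_
  rw [mul_comm]
  exact mul_le_mul_of_nonneg_right (le_of_lt hx) (gaussianPDFReal_nonneg 0 1 x)

theorem gaussianReal_lt_abs_le {ζ : ℝ} (hζ : 0 < ζ) :
    (gaussianReal 0 1 {x | ζ < |x|}).toReal ≤ 2 * (gaussianPDFReal 0 1 ζ / ζ) := by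
  have hsymm : gaussianReal 0 1 (Iio (-ζ)) = gaussianReal 0 1 (Ioi ζ) := by
    conv_rhs => rw [← neg_zero, ← gaussianReal_map_neg,
      Measure.map_apply measurable_neg measurableSet_Ioi]
    congr 1; ext x; simp
  have hset : {x : ℝ | ζ < |x|} = Iio (-ζ) ∪ Ioi ζ := by
    ext x; simp [lt_abs, lt_neg, or_comm]
  calc (gaussianReal 0 1 {x | ζ < |x|}).toReal
      ≤ (gaussianReal 0 1 (Iio (-ζ))).toReal + (gaussianReal 0 1 (Ioi ζ)).toReal := by
        rw [hset]; exact measureReal_union_le _ _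
    _ ≤ 2 * (gaussianPDFReal 0 1 ζ / ζ) := by
        rw [hsymm, ← two_mul]; exact mul_le_mul_of_nonneg_left (gaussianReal_Ioi_le hζ) two_pos.le

theorem gaussianReal_half_lt_le_of_le_mul_exp {w : ℝ → ℝ} {B : ℝ} (hB0 : 0 < B) (hB1 : B < 1)
    (hw : ∀ x, w x ≤ B / 2 * Real.exp (x ^ 2 / 2)) :
    (gaussianReal 0 1 {x | 1 / 2 < w x}).toReal ≤ B / Real.sqrt (Real.pi * Real.log B⁻¹) := by
  have hℓ : 0 < Real.log B⁻¹ := Real.log_pos (one_lt_inv₀ hB0 |>.mpr hB1)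
  set ζ := Real.sqrt (2 * Real.log B⁻¹)
  have hζ : 0 < ζ := Real.sqrt_pos.mpr (by positivity)
  have hζsq : ζ ^ 2 = 2 * Real.log B⁻¹ := Real.sq_sqrt (by positivity)
  have hsub : {x | 1 / 2 < w x} ⊆ {x | ζ < |x|} := by
    intro x hx
    have h1 : B⁻¹ < Real.exp (x ^ 2 / 2) := by
      rw [inv_lt_iff_one_lt_mul₀' hB0]; linarith [hw x, mem_ofPred.mp hx]
    have h2 : ζ ^ 2 < x ^ 2 := by
      rw [hζsq]; linarith [(Real.log_lt_iff_lt_exp (inv_pos.mpr hB0)).mpr h1]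
    simpa [abs_of_pos hζ] using sq_lt_sq.mp h2
  have hpdf : gaussianPDFReal 0 1 ζ = (Real.sqrt (2 * Real.pi))⁻¹ * B := by
    rw [gaussianPDFReal_zero_one, hζsq, show -(2 * Real.log B⁻¹) / 2 = Real.log B by
      rw [Real.log_inv]; ring, Real.exp_log hB0]
  calc (gaussianReal 0 1 {x | 1 / 2 < w x}).toReal
      ≤ (gaussianReal 0 1 {x | ζ < |x|}).toReal := measureReal_mono hsub
    _ ≤ 2 * (gaussianPDFReal 0 1 ζ / ζ) := gaussianReal_lt_abs_le hζ
    _ = B / Real.sqrt (Real.pi * Real.log B⁻¹) := by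
      rw [hpdf, show ζ = Real.sqrt 2 * Real.sqrt (Real.log B⁻¹) from Real.sqrt_mul (by norm_num) _,
        Real.sqrt_mul (by norm_num) Real.pi, Real.sqrt_mul Real.pi_pos.le]
      have h2 : Real.sqrt 2 * Real.sqrt 2 = 2 := Real.mul_self_sqrt (by norm_num)
      have : 0 < Real.sqrt Real.pi := Real.sqrt_pos.mpr Real.pi_pos
      have : 0 < Real.sqrt (Real.log B⁻¹) := Real.sqrt_pos.mpr hℓ
      generalize Real.sqrt (Real.log B⁻¹) = r at *
      field_simp
      linear_combination -h2

theorem tendsto_one_div_sq_nhdsGT_zero : Tendsto (fun τ : ℝ => 1 / τ ^ 2) (𝓝[>] 0) atTop := by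
  simpa [Function.comp_def, one_div, inv_pow] using
    (tendsto_pow_atTop (α := ℝ) two_ne_zero).comp tendsto_inv_nhdsGT_zero

theorem tendsto_log_inv_div_log {a : ℝ} (ha : 0 < a) {L : ℝ → ℝ} (hLpos : ∀ t > 0, 0 < L t)
    (hLlog : (fun x => Real.log (L x)) =o[atTop] Real.log)
    {c : ℝ → ℝ} {c₀ : ℝ} (hc₀ : 0 < c₀) (hc : Tendsto c (𝓝[>] 0) (𝓝 c₀)) :
    Tendsto (fun τ => Real.log (c τ * (τ ^ (2 * a) * L (1 / τ ^ 2)))⁻¹ /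
      (a * Real.log (1 / τ ^ 2))) (𝓝[>] 0) (𝓝 1) := by
  have hy : Tendsto (fun τ : ℝ => a * Real.log (1 / τ ^ 2)) (𝓝[>] 0) atTop :=
    (Real.tendsto_log_atTop.comp tendsto_one_div_sq_nhdsGT_zero).const_mul_atTop ha
  have hcterm : Tendsto (fun τ => Real.log (c τ) / (a * Real.log (1 / τ ^ 2))) (𝓝[>] 0) (𝓝 0) :=
    ((Real.continuousAt_log hc₀.ne').tendsto.comp hc).div_atTop hy
  have hLterm : Tendsto (fun τ => Real.log (L (1 / τ ^ 2)) / (a * Real.log (1 / τ ^ 2)))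
      (𝓝[>] 0) (𝓝 0) := by
    have := (hLlog.tendsto_div_nhds_zero.comp tendsto_one_div_sq_nhdsGT_zero).div_const a
    rw [zero_div] at this
    refine this.congr fun τ => ?_
    rw [Function.comp_apply, div_div, mul_comm (Real.log _) a]
  have := (hcterm.add hLterm).const_sub 1
  rw [add_zero, sub_zero] at this
  refine this.congr' ?_
  filter_upwards [self_mem_nhdsWithin, hc.eventually (lt_mem_nhds hc₀), hy.eventually_gt_atTop 0]
    with τ (hτ : 0 < τ) hcτ hyτ
  have hlog : Real.log (1 / τ ^ 2) = -(2 * Real.log τ) := by simp [Real.log_inv, Real.log_pow]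
  have hL : 0 < L (1 / τ ^ 2) := hLpos _ (by positivity)
  rw [Real.log_inv, Real.log_mul hcτ.ne' (by positivity), Real.log_mul (by positivity) hL.ne',
    Real.log_rpow hτ]
  rw [hlog] at hyτ ⊢
  have : Real.log τ ≠ 0 := by rintro h; simp [h] at hyτ
  field_simp
  ring

theorem gaussianReal_half_lt_le_of_le_mul_exp' {w : ℝ → ℝ} {a C P G y : ℝ} (ha : 0 < a)
    (hC : 0 < C) (hP : 0 < P) (hG : 0 < 1 + G) (hy : 0 < y)
    (hρ : 0 < Real.log (C * (1 + G) * P)⁻¹ / (a * y))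
    (hw : ∀ x, w x ≤ C / 2 * Real.exp (x ^ 2 / 2) * P * (1 + G)) :
    (gaussianReal 0 1 {x | 1 / 2 < w x}).toReal ≤
      1 / Real.sqrt (Real.pi * a) * C * (P / Real.sqrt y) *
        ((1 + G) / Real.sqrt (Real.log (C * (1 + G) * P)⁻¹ / (a * y))) := by
  set B := C * (1 + G) * P
  have hB : 0 < B := by positivity
  set ρ := Real.log B⁻¹ / (a * y)
  have hℓ : Real.log B⁻¹ = ρ * (a * y) := (div_mul_cancel₀ _ (by positivity)).symm
  have hB1 : B < 1 := by
    rw [← one_lt_inv₀ hB, ← Real.log_pos_iff (inv_pos.2 hB).le, hℓ]; positivity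
  refine (gaussianReal_half_lt_le_of_le_mul_exp hB hB1 fun x => (hw x).trans_eq (by ring)).trans_eq
    ?_
  rw [hℓ, show Real.pi * (ρ * (a * y)) = Real.pi * a * y * ρ by ring,
    Real.sqrt_mul (by positivity), Real.sqrt_mul (by positivity)]
  have := Real.sqrt_pos.2 hy
  have := Real.sqrt_pos.2 hρ
  have := Real.sqrt_pos.2 (mul_pos Real.pi_pos ha)
  field_simp
  ring

theorem type_one_error_bound_general (a K A₀ : ℝ) (ha : a ∈ Ioo (0:ℝ) 1) (hK : 0 < K)
    (hA₀ : 1 ≤ A₀) (L : ℝ → ℝ)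
    (hLmeas : Measurable L)
    (hLpos : ∀ t > 0, 0 < L t)
    (hslow : ∀ c > 0, Tendsto (fun x => L (c * x) / L x) atTop (𝓝 1))
    (g : ℝ → ℝ) (hg : Tendsto g (𝓝[>] 0) (𝓝 0))
    (hbound : ∀ τ ∈ Ioo (0:ℝ) 1, ∀ x : ℝ,
      postShrinkWeight a L τ x ≤
        (A₀ * K / (a * (1 - a))) * Real.exp (x ^ 2 / 2) * τ ^ (2 * a) *
          L (1 / τ ^ 2) * (1 + g τ)) :
    ∃ h : ℝ → ℝ, Tendsto h (𝓝[>] 0) (𝓝 0) ∧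
      ∀ᶠ τ in 𝓝[>] (0:ℝ),
        ((gaussianReal 0 1) {x : ℝ | 1/2 < postShrinkWeight a L τ x}).toReal ≤
          (1 / Real.sqrt (Real.pi * a)) * (2 * A₀ * K / (a * (1 - a))) *
            (τ ^ (2 * a) * L (1 / τ ^ 2) / Real.sqrt (Real.log (1 / τ ^ 2))) *
            (1 + h τ) := by
  obtain ⟨ha0, ha1⟩ := ha
  set C := 2 * A₀ * K / (a * (1 - a))
  have hC : 0 < C :=
    div_pos (mul_pos (mul_pos two_pos (by linarith)) hK) (mul_pos ha0 (sub_pos.2 ha1))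
  set ρ : ℝ → ℝ := fun τ => Real.log (C * (1 + g τ) * (τ ^ (2 * a) * L (1 / τ ^ 2)))⁻¹ /
    (a * Real.log (1 / τ ^ 2))
  have hρ : Tendsto ρ (𝓝[>] 0) (𝓝 1) := tendsto_log_inv_div_log ha0 hLpos
    (isLittleO_log_comp_log_of_slowlyVarying hLmeas hLpos hslow) hC
    (by simpa using (hg.const_add 1).const_mul C)
  have hu : Tendsto (fun τ => (1 + g τ) / Real.sqrt (ρ τ)) (𝓝[>] 0) (𝓝 1) := by
    have := (hg.const_add 1).div hρ.sqrt (by norm_num)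
    rwa [add_zero, Real.sqrt_one, div_one] at this
  refine ⟨fun τ => (1 + g τ) / Real.sqrt (ρ τ) - 1, by simpa using hu.sub_const 1, ?_⟩
  filter_upwards [Ioo_mem_nhdsGT zero_lt_one, hg.eventually (lt_mem_nhds neg_one_lt_zero),
    hρ.eventually (lt_mem_nhds one_pos),
    (Real.tendsto_log_atTop.comp tendsto_one_div_sq_nhdsGT_zero).eventually_gt_atTop 0]
    with τ hτ hgτ hρτ hyτ
  have hP : 0 < τ ^ (2 * a) * L (1 / τ ^ 2) :=
    mul_pos (Real.rpow_pos_of_pos hτ.1 _) (hLpos _ (by have := hτ.1; positivity))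
  rw [add_sub_cancel]
  exact gaussianReal_half_lt_le_of_le_mul_exp' ha0 hC hP (by linarith) hyτ hρτ
    fun x => (hbound τ hτ x).trans_eq (by ring)

/-- Theorem 4.5 (type I error bound): under `H₀`, `X ~ N(0,1)`; if the posterior
shrinkage weight satisfies the moment bound uniformly in `x` as `τ → 0⁺`, then
the probability of rejecting `H₀` (i.e. of `E(1-κ|X,τ) > 1/2`) satisfies
`t₁ ≤ (1/√(πa)) (2A₀K/(a(1-a))) τ^{2a} L(1/τ²) / √(log(1/τ²)) (1+o(1))`. -/
theorem type_one_error_bound (a K A₀ : ℝ) (ha : a ∈ Ioo (0:ℝ) 1) (hK : 0 < K)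
    (hA₀ : 1 ≤ A₀) (L : ℝ → ℝ)
    (hLmeas : Measurable L)
    (hLpos : ∀ t > 0, 0 < L t)
    (hslow : ∀ c > 0, Tendsto (fun x => L (c * x) / L x) atTop (𝓝 1))
    (hnorm : K * ∫ t in Ioi (0:ℝ), t ^ (-a - 1) * L t = 1)
    (g : ℝ → ℝ) (hg : Tendsto g (𝓝[>] 0) (𝓝 0))
    (hbound : ∀ τ ∈ Ioo (0:ℝ) 1, ∀ x : ℝ,
      postShrinkWeight a L τ x ≤
        (A₀ * K / (a * (1 - a))) * Real.exp (x ^ 2 / 2) * τ ^ (2 * a) *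
          L (1 / τ ^ 2) * (1 + g τ)) :
    ∃ h : ℝ → ℝ, Tendsto h (𝓝[>] 0) (𝓝 0) ∧
      ∀ᶠ τ in 𝓝[>] (0:ℝ),
        ((gaussianReal 0 1) {x : ℝ | 1/2 < postShrinkWeight a L τ x}).toReal ≤
          (1 / Real.sqrt (Real.pi * a)) * (2 * A₀ * K / (a * (1 - a))) *
            (τ ^ (2 * a) * L (1 / τ ^ 2) / Real.sqrt (Real.log (1 / τ ^ 2))) *
            (1 + h τ) :=
  type_one_error_bound_general a K A₀ ha hK hA₀ L hLmeas hLpos hslow g hg hbound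
end

section
/- Let X₁,...,X_m be i.i.d. with marginal distribution (1-p)N(0,1) + pN(0,1+ψ²), where p ∝ m^{-ε} for some ε ∈ (0,1) and log(ψ² (1-p)²/p²)/ψ² → C ∈ (0,∞) as m → ∞, with ψ² → ∞. Then for fixed c₁ ≥ 2, α_m := P(|X₁| > √(c₁ log m)) satisfies α_m = 2βp(1+o(1)) as m → ∞, where β = 1 - Φ(√(c₁C/(2ε))) ∈ (0, 1/2). -/
open MeasureTheory ProbabilityTheory Filter Set Topology

/-- The standard normal CDF. -/
noncomputable def stdNormCDF (t : ℝ) : ℝ :=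
  ((gaussianReal 0 1) (Iic t)).toReal

/-- The marginal probability `α_m = P(|X₁| > √(c₁ log m))` under the two-groups
model `X ~ (1-p)N(0,1) + pN(0,1+ψ²)`. -/
noncomputable def tailProb (p ψsq : ℕ → ℝ) (c₁ : ℝ) (m : ℕ) : ℝ :=
  (1 - p m) *
      ((gaussianReal 0 1) {x : ℝ | Real.sqrt (c₁ * Real.log m) < |x|}).toReal +
    p m *
      ((gaussianReal 0 (1 + ψsq m).toNNReal)
        {x : ℝ | Real.sqrt (c₁ * Real.log m) < |x|}).toReal

/-! With `t = √(c₁ log m)` the tail probability splits as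
`α_m = 2(1-p)(1 - Φ(t)) + 2p(1 - Φ(t / √(1+ψ²)))`.
The Chernoff bound `1 - Φ(t) ≤ exp(-t²/2) = m^(-c₁/2)` makes the null part
`o(m^(-ε)) = o(p)`, because `c₁/2 ≥ 1 > ε`. Since `p = c m^(-ε)`,
`log v = log ψ² + 2 log(1-p) - 2 log c + 2ε log m`, so `log m / ψ² → C/(2ε)`;
hence `t / √(1+ψ²) → √(c₁C/(2ε))` and, by continuity of `Φ`, the alternative part
is `2βp(1 + o(1))`. -/

open Real

lemma gaussianReal_real_pos_of_volume_ne_zero {μ : ℝ} {v : NNReal} (hv : v ≠ 0) {s : Set ℝ}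
    (hs : volume s ≠ 0) :
    0 < (gaussianReal μ v).real s :=
  ENNReal.toReal_pos (fun h ↦ hs (gaussianReal_absolutelyContinuous' μ hv h))
    (measure_ne_top _ _)

lemma one_sub_stdNormCDF (t : ℝ) : 1 - stdNormCDF t = (gaussianReal 0 1).real (Ioi t) := by
  rw [← compl_Iic, probReal_compl_eq_one_sub measurableSet_Iic]
  rfl

lemma gaussianReal_real_Iio_neg (v : NNReal) (t : ℝ) :
    (gaussianReal 0 v).real (Iio (-t)) = (gaussianReal 0 v).real (Ioi t) := by
  conv_lhs => rw [← neg_zero, ← gaussianReal_map_neg,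
    map_measureReal_apply measurable_neg measurableSet_Iio]
  congr 1
  ext x
  simp

lemma gaussianReal_real_abs_gt {t : ℝ} (ht : 0 ≤ t) :
    (gaussianReal 0 1).real {x | t < |x|} = 2 * (1 - stdNormCDF t) := by
  have hsplit : {x : ℝ | t < |x|} = Iio (-t) ∪ Ioi t := by
    ext x
    simp only [mem_ofPred_eq, mem_union, mem_Iio, mem_Ioi, lt_abs, lt_neg]
    tauto
  rw [hsplit, measureReal_union (Ioi_disjoint_Iio_of_le (by linarith)).symm measurableSet_Ioi,
    gaussianReal_real_Iio_neg, one_sub_stdNormCDF]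
  ring

lemma gaussianReal_abs_gt_of_variance {V : ℝ} (hV : 0 < V) (t : ℝ) :
    gaussianReal 0 V.toNNReal {x | t < |x|} = gaussianReal 0 1 {x | t / √V < |x|} := by
  have hσ : 0 < √V := sqrt_pos.mpr hV
  have hmap : (gaussianReal 0 1).map (√V * ·) = gaussianReal 0 V.toNNReal := by
    rw [gaussianReal_map_const_mul]
    congr 1
    · ring
    · ext
      simp [sq_sqrt hV.le, hV.le]
  rw [← hmap,
    Measure.map_apply (by fun_prop) (measurableSet_lt measurable_const measurable_abs)]
  congr 1
  ext x
  simp only [mem_preimage, mem_ofPred_eq, abs_mul, abs_of_pos hσ, div_lt_iff₀ hσ, mul_comm]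

lemma one_sub_stdNormCDF_le_exp {t : ℝ} (ht : 0 ≤ t) :
    1 - stdNormCDF t ≤ exp (-t ^ 2 / 2) := by
  rw [one_sub_stdNormCDF]
  calc (gaussianReal 0 1).real (Ioi t) ≤ (gaussianReal 0 1).real {x | t ≤ id x} :=
        measureReal_mono fun _ hx ↦ le_of_lt (mem_Ioi.mp hx)
    _ ≤ exp (-t * t) * mgf id (gaussianReal 0 1) t :=
        measure_ge_le_exp_mul_mgf t ht (integrable_exp_mul_gaussianReal t)
    _ = exp (-t ^ 2 / 2) := by
        rw [mgf_id_gaussianReal, ← exp_add]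
        congr 1
        push_cast
        ring

lemma one_sub_stdNormCDF_pos (t : ℝ) : 0 < 1 - stdNormCDF t := by
  rw [one_sub_stdNormCDF]
  exact gaussianReal_real_pos_of_volume_ne_zero one_ne_zero (by simp)

lemma one_sub_stdNormCDF_lt_half {t : ℝ} (ht : 0 < t) : 1 - stdNormCDF t < 1 / 2 := by
  have hcompl : {x : ℝ | t < |x|}ᶜ = Icc (-t) t := by
    ext x
    simp [abs_le]
  have hIcc : 0 < (gaussianReal 0 1).real (Icc (-t) t) :=
    gaussianReal_real_pos_of_volume_ne_zero one_ne_zero (by simpa using ht)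
  have h := probReal_compl_eq_one_sub (μ := gaussianReal 0 1)
    (measurableSet_lt measurable_const measurable_abs : MeasurableSet {x : ℝ | t < |x|})
  rw [hcompl, gaussianReal_real_abs_gt ht.le] at h
  linarith

lemma continuous_stdNormCDF : Continuous stdNormCDF := by
  have hint := integrable_gaussianPDFReal 0 1
  have hprim (t : ℝ) :
      stdNormCDF t = stdNormCDF 0 + ∫ x in (0 : ℝ)..t, gaussianPDFReal 0 1 x := by
    simp only [stdNormCDF, gaussianReal_apply_eq_integral 0 one_ne_zero,
      ENNReal.toReal_ofReal
        (setIntegral_nonneg measurableSet_Iic fun x _ ↦ gaussianPDFReal_nonneg 0 1 x)]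
    rw [← intervalIntegral.integral_Iic_sub_Iic hint.integrableOn hint.integrableOn]
    ring
  rw [funext hprim]
  exact continuous_const.add (hint.continuous_primitive 0)

lemma tendsto_div_one_add_of_tendsto_div {α : Type*} {l : Filter α} {f g : α → ℝ} {K : ℝ}
    (hf : Tendsto (fun a ↦ f a / g a) l (𝓝 K)) (hg : Tendsto g l atTop) :
    Tendsto (fun a ↦ f a / (1 + g a)) l (𝓝 K) := by
  have hratio : Tendsto (fun a ↦ g a / (1 + g a)) l (𝓝 1) := by
    have h := (tendsto_const_nhds (x := (1 : ℝ))).sub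
      (tendsto_inv_atTop_zero.comp (tendsto_atTop_add_const_left l 1 hg))
    rw [sub_zero] at h
    refine h.congr' ?_
    filter_upwards [hg.eventually_gt_atTop 0] with a ha
    simp only [Function.comp_apply]
    field_simp
    ring
  simpa using (hf.mul hratio).congr' <| by
    filter_upwards [hg.eventually_gt_atTop 0] with a ha
    field_simp

lemma tendsto_of_eq_const_mul_rpow_neg {p : ℕ → ℝ} {c ε : ℝ} (hε : 0 < ε)
    (hp : ∀ m ≥ 1, p m = c * (m : ℝ) ^ (-ε)) : Tendsto p atTop (𝓝 0) := by
  have h := ((tendsto_rpow_neg_atTop hε).comp tendsto_natCast_atTop_atTop).const_mul c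
  rw [mul_zero] at h
  exact h.congr' <| (eventually_ge_atTop 1).mono fun m hm ↦ (hp m hm).symm

lemma tendsto_log_natCast_div_of_tendsto_log_odds {p ψsq : ℕ → ℝ} {C ε c : ℝ}
    (hε : 0 < ε) (hc : 0 < c) (hp : ∀ m ≥ 1, p m = c * (m : ℝ) ^ (-ε))
    (hψ : Tendsto ψsq atTop atTop)
    (hv : Tendsto (fun m ↦ log (ψsq m * ((1 - p m) / p m) ^ 2) / ψsq m) atTop (𝓝 C)) :
    Tendsto (fun m : ℕ ↦ log m / ψsq m) atTop (𝓝 (C / (2 * ε))) := by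
  have hp0 := tendsto_of_eq_const_mul_rpow_neg hε hp
  have hlogψ : Tendsto (fun m ↦ log (ψsq m) / ψsq m) atTop (𝓝 0) :=
    isLittleO_log_id_atTop.tendsto_div_nhds_zero.comp hψ
  have hbounded : Tendsto (fun m ↦ (2 * log (1 - p m) - 2 * log c) / ψsq m) atTop (𝓝 0) := by
    have hlog1p : Tendsto (fun m ↦ log (1 - p m)) atTop (𝓝 0) := by
      simpa using (tendsto_const_nhds.sub hp0).log (by norm_num : (1 : ℝ) - 0 ≠ 0)
    exact (((hlog1p.const_mul 2).sub_const _).div_atTop hψ)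
  have hdecomp : ∀ᶠ m : ℕ in atTop, log (ψsq m * ((1 - p m) / p m) ^ 2) / ψsq m
      - log (ψsq m) / ψsq m - (2 * log (1 - p m) - 2 * log c) / ψsq m
      = 2 * ε * (log m / ψsq m) := by
    filter_upwards [eventually_ge_atTop 1, hψ.eventually_gt_atTop 0,
      hp0.eventually (gt_mem_nhds one_pos)] with m hm hψm hp1
    have hm0 : (0 : ℝ) < m := by exact_mod_cast hm
    have hpm : 0 < p m := hp m hm ▸ by positivity
    have hlogp : log (p m) = log c - ε * log m := by
      rw [hp m hm, log_mul hc.ne' (by positivity), log_rpow hm0]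
      ring
    rw [log_mul hψm.ne' (by have := sub_pos.mpr hp1; positivity), log_pow,
      log_div (by linarith) hpm.ne', hlogp]
    field_simp
    push_cast
    ring
  have h := (((hv.sub hlogψ).sub hbounded).congr' hdecomp).div_const (2 * ε)
  simpa [mul_div_cancel_left₀ _ (by positivity : 2 * ε ≠ 0)] using h

lemma tendsto_one_sub_stdNormCDF_sqrt_log_div_rpow {c₁ ε : ℝ} (hc₁ : 0 ≤ c₁)
    (hε : 2 * ε < c₁) :
    Tendsto (fun m : ℕ ↦ (1 - stdNormCDF √(c₁ * log m)) / (m : ℝ) ^ (-ε))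
      atTop (𝓝 0) := by
  have hdecay : Tendsto (fun m : ℕ ↦ (m : ℝ) ^ (-(c₁ / 2 - ε))) atTop (𝓝 0) :=
    (tendsto_rpow_neg_atTop (by linarith)).comp tendsto_natCast_atTop_atTop
  refine squeeze_zero' (Eventually.of_forall fun m ↦ ?_) ?_ hdecay
  · exact div_nonneg (one_sub_stdNormCDF_pos _).le (rpow_nonneg (Nat.cast_nonneg m) _)
  filter_upwards [eventually_ge_atTop 1] with m hm
  have hm0 : (0 : ℝ) < m := by exact_mod_cast hm
  have hlog : 0 ≤ c₁ * log m := mul_nonneg hc₁ (log_nonneg (by exact_mod_cast hm))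
  calc (1 - stdNormCDF √(c₁ * log m)) / (m : ℝ) ^ (-ε)
      ≤ exp (-√(c₁ * log m) ^ 2 / 2) / (m : ℝ) ^ (-ε) := by
        gcongr
        exact one_sub_stdNormCDF_le_exp (sqrt_nonneg _)
    _ = (m : ℝ) ^ (-(c₁ / 2 - ε)) := by
        rw [sq_sqrt hlog, rpow_def_of_pos hm0, rpow_def_of_pos hm0, ← exp_sub]
        ring_nf

lemma tailProb_eq {p ψsq : ℕ → ℝ} {c₁ : ℝ} {m : ℕ} (hψ : 0 < 1 + ψsq m) :
    tailProb p ψsq c₁ m = 2 * (1 - p m) * (1 - stdNormCDF √(c₁ * log m))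
      + 2 * p m * (1 - stdNormCDF (√(c₁ * log m) / √(1 + ψsq m))) := by
  rw [tailProb, gaussianReal_abs_gt_of_variance hψ, ← measureReal_def, ← measureReal_def,
    gaussianReal_real_abs_gt (sqrt_nonneg _), gaussianReal_real_abs_gt (by positivity)]
  ring

theorem tail_prob_asymptotics_general (p ψsq : ℕ → ℝ) (C ε c₁ c : ℝ)
    (hε : ε ∈ Ioo (0:ℝ) 1) (hc₁ : 2 ≤ c₁) (hc : 0 < c)
    (hp : ∀ m ≥ 1, p m = c * (m : ℝ) ^ (-ε))
    (hψ : Tendsto ψsq atTop atTop)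
    (hC : 0 < C)
    (hv : Tendsto
      (fun m : ℕ => Real.log (ψsq m * ((1 - p m) / p m) ^ 2) / ψsq m)
      atTop (𝓝 C)) :
    0 < 1 - stdNormCDF (Real.sqrt (c₁ * C / (2 * ε))) ∧
      1 - stdNormCDF (Real.sqrt (c₁ * C / (2 * ε))) < 1/2 ∧
      Tendsto
        (fun m : ℕ =>
          tailProb p ψsq c₁ m /
            (2 * (1 - stdNormCDF (Real.sqrt (c₁ * C / (2 * ε)))) * p m))
        atTop (𝓝 1) := by
  obtain ⟨hε0, hε1⟩ := hε
  set L := √(c₁ * C / (2 * ε))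
  set β := 1 - stdNormCDF L
  have hβ : 0 < β := one_sub_stdNormCDF_pos L
  refine ⟨hβ, one_sub_stdNormCDF_lt_half (sqrt_pos.mpr (by positivity)), ?_⟩
  have hthreshold :
      Tendsto (fun m : ℕ ↦ √(c₁ * log m) / √(1 + ψsq m)) atTop (𝓝 L) := by
    have hratio :
        Tendsto (fun m : ℕ ↦ c₁ * log m / ψsq m) atTop (𝓝 (c₁ * C / (2 * ε))) := by
      simpa only [mul_div_assoc] using
        (tendsto_log_natCast_div_of_tendsto_log_odds hε0 hc hp hψ hv).const_mul c₁
    refine (tendsto_div_one_add_of_tendsto_div hratio hψ).sqrt.congr' ?_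
    filter_upwards [hψ.eventually_gt_atTop 0] with m hm
    exact sqrt_div' _ (by linarith)
  have hsignal :
      Tendsto (fun m : ℕ ↦ (1 - stdNormCDF (√(c₁ * log m) / √(1 + ψsq m))) / β)
        atTop (𝓝 1) := by
    have h := (((continuous_stdNormCDF.tendsto L).comp hthreshold).const_sub 1).div_const β
    rwa [div_self hβ.ne'] at h
  have hnull :=
    tendsto_one_sub_stdNormCDF_sqrt_log_div_rpow (by linarith) (by linarith : 2 * ε < c₁)
  have hlim := (((tendsto_const_nhds (x := (1 : ℝ))).sub
    (tendsto_of_eq_const_mul_rpow_neg hε0 hp)).mul hnull).div_const (β * c) |>.add hsignal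
  rw [mul_zero, zero_div, zero_add] at hlim
  refine hlim.congr' ?_
  filter_upwards [eventually_ge_atTop 1, hψ.eventually_gt_atTop 0] with m hm hψm
  have hpow : (0 : ℝ) < (m : ℝ) ^ (-ε) := rpow_pos_of_pos (by exact_mod_cast hm) _
  rw [tailProb_eq (by linarith), hp m hm]
  field_simp

/-- Under the two-groups model with `p ∝ m^{-ε}`, `ψ² → ∞` and
`log(ψ²((1-p)/p)²)/ψ² → C ∈ (0,∞)`, for fixed `c₁ ≥ 2` one has
`α_m = P(|X₁| > √(c₁ log m)) = 2βp(1+o(1))` where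
`β = 1 - Φ(√(c₁C/(2ε))) ∈ (0,1/2)`. -/
theorem tail_prob_asymptotics (p ψsq : ℕ → ℝ) (C ε c₁ c : ℝ)
    (hε : ε ∈ Ioo (0:ℝ) 1) (hc₁ : 2 ≤ c₁) (hc : 0 < c)
    (hp : ∀ m ≥ 1, p m = c * (m : ℝ) ^ (-ε))
    (hp01 : ∀ m ≥ 1, p m ∈ Ioo (0:ℝ) 1)
    (hψpos : ∀ m, 0 < ψsq m)
    (hψ : Tendsto ψsq atTop atTop)
    (hC : 0 < C)
    (hv : Tendsto
      (fun m : ℕ => Real.log (ψsq m * ((1 - p m) / p m) ^ 2) / ψsq m)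
      atTop (𝓝 C)) :
    0 < 1 - stdNormCDF (Real.sqrt (c₁ * C / (2 * ε))) ∧
      1 - stdNormCDF (Real.sqrt (c₁ * C / (2 * ε))) < 1/2 ∧
      Tendsto
        (fun m : ℕ =>
          tailProb p ψsq c₁ m /
            (2 * (1 - stdNormCDF (Real.sqrt (c₁ * C / (2 * ε)))) * p m))
        atTop (𝓝 1) :=
  tail_prob_asymptotics_general p ψsq C ε c₁ c hε hc₁ hc hp hψ hC hv
end
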